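/- arXiv:2208.10184 — 11 statements merged into one kernel-verified Lean document; each statement's English description precedes it below -/
import Mathlib

section
/- Let a, b > 0 and let (t_n) be a strictly decreasing sequence of real numbers in (0,1) converging to 0. Let ã₁ = (a+t₁, a+t₂, …, a+t_n, …) and ã₂ = (b−t₁, b−t₂, …, b−t_n, …) be the corresponding elements of ℓ∞, and let 𝒜 = {ã₁, ã₂}. Then every element of 𝒮̄ satisfies the weak *-Property, while the elements of 𝒮̄ satisfying the *-Property are exactly (a+t₁, b−t₁) and (a, b). -/
open scoped ENNReal

noncomputable section

/-- `ℓ∞`, the space of bounded real sequences with the supremum norm. -/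
abbrev Linf : Type := lp (fun _ : ℕ => ℝ) ∞

/-- The `i`-th component of the family `a = {ã₁, …, ã_m}`. -/
def component {m : ℕ} (a : Fin m → Linf) (i : ℕ) : Fin m → ℝ :=
  fun k => a k i

/-- `𝒮̄`, the closure (in `ℝ^m`) of the set of all components of the family `a`. -/
def SbarSet {m : ℕ} (a : Fin m → Linf) : Set (Fin m → ℝ) :=
  closure (Set.range (component a))

/-- The equivalence class `E_x = {b ∈ 𝒮̄ : b = ±x}`. -/
def EquivClass {m : ℕ} (a : Fin m → Linf) (x : Fin m → ℝ) : Set (Fin m → ℝ) :=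
  {b ∈ SbarSet a | b = x ∨ b = -x}

/-- `x ∈ 𝒮̄` satisfies the weak `*`-Property: there is `β ∈ ℝ^m` with
`|∑ β_k x̂_k| ≥ sup {|∑ β_k b̂_k| : b ∈ 𝒮̄ \ E_x}`. -/
def WeakStarProp {m : ℕ} (a : Fin m → Linf) (x : Fin m → ℝ) : Prop :=
  x ∈ SbarSet a ∧ ∃ β : Fin m → ℝ,
    ∀ b ∈ SbarSet a \ EquivClass a x, |∑ k, β k * b k| ≤ |∑ k, β k * x k|

/-- `x ∈ 𝒮̄` satisfies the `*`-Property: there is `β ∈ ℝ^m` with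
`|∑ β_k x̂_k| > |∑ β_k b̂_k|` for every `b ∈ 𝒮̄ \ E_x`. -/
def StarProp {m : ℕ} (a : Fin m → Linf) (x : Fin m → ℝ) : Prop :=
  x ∈ SbarSet a ∧ ∃ β : Fin m → ℝ,
    ∀ b ∈ SbarSet a \ EquivClass a x, |∑ k, β k * b k| < |∑ k, β k * x k|

/-!
All of `𝒮̄` lies on the line `s ↦ (a + s, b - s)`: it is the image of the parameter set
`{0} ∪ {t n}`. The functional `β = (1, 1)` equals the constant `a + b ≠ 0` on `𝒮̄`; this gives the
weak `*`-Property at once, and it excludes `y = -x`, so that `E_x` is just `{x}`. As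
`β ↦ (β₀ a + β₁ b, β₀ - β₁)` is onto `ℝ²`, the `*`-Property at the point with parameter `s` says
that `|c + d s'|` is strictly maximal at `s` for some `c, d`. By convexity this fails at `t (n + 1)`,
which lies between `0` and `t n`; at `t 0` take `|s'|`, and at `0` take `|t 0 - s'|`.
-/

theorem closure_range_eq_insert_of_tendsto {X : Type*} [TopologicalSpace X] [T2Space X]
    {u : ℕ → X} {x : X} (hu : Filter.Tendsto u Filter.atTop (nhds x)) :
    closure (Set.range u) = insert x (Set.range u) :=
  (closure_minimal (Set.subset_insert _ _) hu.isCompact_insert_range.isClosed).antisymm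
    (Set.insert_subset (mem_closure_of_tendsto hu (.of_forall Set.mem_range_self))
      subset_closure)

theorem abs_add_mul_le_max {c d s r : ℝ} (hs : 0 ≤ s) (hsr : s ≤ r) :
    |c + d * s| ≤ max |c| |c + d * r| := by
  rcases le_total 0 d with hd | hd
  · exact abs_le_max_abs_abs (by nlinarith) (by nlinarith)
  · rw [max_comm]
    exact abs_le_max_abs_abs (by nlinarith) (by nlinarith)

section SumConst

variable {m : ℕ} {a : Fin m → Linf}

theorem weakStarProp_of_sum_const {γ : Fin m → ℝ} {κ : ℝ}
    (h : ∀ y ∈ SbarSet a, ∑ k, γ k * y k = κ) {x : Fin m → ℝ} (hx : x ∈ SbarSet a) :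
    WeakStarProp a x :=
  ⟨hx, γ, fun y hy => by rw [h y hy.1, h x hx]⟩

theorem sdiff_equivClass_of_sum_const {γ : Fin m → ℝ} {κ : ℝ} (hκ : κ ≠ 0)
    (h : ∀ y ∈ SbarSet a, ∑ k, γ k * y k = κ) {x : Fin m → ℝ} (hx : x ∈ SbarSet a) :
    SbarSet a \ EquivClass a x = SbarSet a \ {x} := by
  ext y
  simp only [EquivClass, Set.mem_sdiff, Set.mem_ofPred_eq, Set.mem_singleton_iff]
  refine and_congr_right fun hy => not_congr ⟨?_, fun hyx => ⟨hy, .inl hyx⟩⟩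
  rintro ⟨-, hyx | rfl⟩
  · exact hyx
  · have := h _ hy
    simp only [Pi.neg_apply, mul_neg, Finset.sum_neg_distrib, h x hx] at this
    exact absurd (neg_eq_self.mp this) hκ

theorem starProp_iff_of_sum_const {γ : Fin m → ℝ} {κ : ℝ} (hκ : κ ≠ 0)
    (h : ∀ y ∈ SbarSet a, ∑ k, γ k * y k = κ) {x : Fin m → ℝ} (hx : x ∈ SbarSet a) :
    StarProp a x ↔ ∃ β : Fin m → ℝ,
      ∀ y ∈ SbarSet a, y ≠ x → |∑ k, β k * y k| < |∑ k, β k * x k| := by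
  simp only [StarProp, sdiff_equivClass_of_sum_const hκ h hx, Set.mem_sdiff,
    Set.mem_singleton_iff, and_imp, true_and, hx]

end SumConst

def linePoint (a b s : ℝ) : Fin 2 → ℝ := ![a + s, b - s]

section LinePoint

variable {a b : ℝ}

theorem linePoint_zero : linePoint a b 0 = ![a, b] := by
  simp [linePoint]

theorem linePoint_injective : Function.Injective (linePoint a b) := fun s s' h => by
  simpa [linePoint] using congrFun h 0

theorem sum_mul_linePoint (β : Fin 2 → ℝ) (s : ℝ) :
    ∑ k, β k * linePoint a b s k = (β 0 * a + β 1 * b) + (β 0 - β 1) * s := by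
  simp only [Fin.sum_univ_two, linePoint, Matrix.cons_val_zero, Matrix.cons_val_one]
  ring

theorem continuous_linePoint : Continuous (linePoint a b) := by
  unfold linePoint
  fun_prop

theorem exists_sum_mul_linePoint_eq (hab : a + b ≠ 0) (c d : ℝ) :
    ∃ β : Fin 2 → ℝ, ∀ s, ∑ k, β k * linePoint a b s k = c + d * s :=
  ⟨![(c + d * b) / (a + b), (c - d * a) / (a + b)], fun s => by
    rw [sum_mul_linePoint]
    simp only [Matrix.cons_val_zero, Matrix.cons_val_one]
    field_simp
    ring⟩

end LinePoint

section Sequence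

variable {t : ℕ → ℝ}

theorem mem_Icc_of_mem_insert_range (ht : ∀ n, 0 < t n) (htanti : StrictAnti t) {s : ℝ}
    (hs : s ∈ insert 0 (Set.range t)) : s ∈ Set.Icc 0 (t 0) := by
  rcases hs with rfl | ⟨i, rfl⟩
  · exact ⟨le_rfl, (ht 0).le⟩
  · exact ⟨(ht i).le, htanti.antitone (Nat.zero_le i)⟩

theorem not_forall_abs_lt_succ (ht : ∀ n, 0 < t n) (htanti : StrictAnti t) (c d : ℝ) (n : ℕ) :
    ¬ ∀ s ∈ insert 0 (Set.range t), s ≠ t (n + 1) → |c + d * s| < |c + d * t (n + 1)| := by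
  intro h
  have h0 := h 0 (Set.mem_insert _ _) (ht (n + 1)).ne
  have hn := h (t n) (Set.mem_insert_of_mem _ ⟨n, rfl⟩) (htanti n.lt_succ_self).ne'
  have := abs_add_mul_le_max (c := c) (d := d) (ht (n + 1)).le (htanti n.lt_succ_self).le
  rw [mul_zero, add_zero] at h0
  exact (this.trans_lt (max_lt h0 hn)).false

theorem exists_forall_abs_lt_iff (ht : ∀ n, 0 < t n) (htanti : StrictAnti t) {s : ℝ}
    (hs : s ∈ insert 0 (Set.range t)) :
    (∃ c d : ℝ, ∀ s' ∈ insert 0 (Set.range t), s' ≠ s → |c + d * s'| < |c + d * s|) ↔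
      s = t 0 ∨ s = 0 := by
  constructor
  · rintro ⟨c, d, h⟩
    rcases hs with rfl | ⟨_ | n, rfl⟩
    · exact .inr rfl
    · exact .inl rfl
    · exact (not_forall_abs_lt_succ ht htanti c d n h).elim
  · rintro (rfl | rfl)
    · refine ⟨0, 1, fun s' hs' hne => ?_⟩
      have := mem_Icc_of_mem_insert_range ht htanti hs'
      simp only [zero_add, one_mul]
      rw [abs_of_nonneg this.1, abs_of_pos (ht 0)]
      exact lt_of_le_of_ne this.2 hne
    · refine ⟨t 0, -1, fun s' hs' hne => ?_⟩
      have := mem_Icc_of_mem_insert_range ht htanti hs'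
      rw [mul_zero, add_zero, abs_of_pos (ht 0), abs_lt]
      have hpos : 0 < s' := lt_of_le_of_ne this.1 (Ne.symm hne)
      constructor <;> linarith [this.2]

end Sequence

section Family

variable {a b : ℝ} {t : ℕ → ℝ} {A : Fin 2 → Linf}

theorem component_eq_linePoint (hA0 : ∀ i : ℕ, A 0 i = a + t i)
    (hA1 : ∀ i : ℕ, A 1 i = b - t i) : component A = linePoint a b ∘ t := by
  funext i k
  fin_cases k <;> simp [component, linePoint, hA0, hA1]

theorem sbarSet_eq (htlim : Filter.Tendsto t Filter.atTop (nhds 0))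
    (hA0 : ∀ i : ℕ, A 0 i = a + t i) (hA1 : ∀ i : ℕ, A 1 i = b - t i) :
    SbarSet A = linePoint a b '' insert 0 (Set.range t) := by
  rw [SbarSet, component_eq_linePoint hA0 hA1,
    closure_range_eq_insert_of_tendsto ((continuous_linePoint.tendsto 0).comp htlim),
    Set.image_insert_eq, Set.range_comp]

theorem sum_mul_eq_of_mem_sbarSet (htlim : Filter.Tendsto t Filter.atTop (nhds 0))
    (hA0 : ∀ i : ℕ, A 0 i = a + t i) (hA1 : ∀ i : ℕ, A 1 i = b - t i) :
    ∀ y ∈ SbarSet A, ∑ k, ![1, 1] k * y k = a + b := by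
  rw [sbarSet_eq htlim hA0 hA1]
  rintro _ ⟨s, -, rfl⟩
  rw [sum_mul_linePoint]
  simp

theorem starProp_linePoint_iff (hab : a + b ≠ 0) (htlim : Filter.Tendsto t Filter.atTop (nhds 0))
    (hA0 : ∀ i : ℕ, A 0 i = a + t i) (hA1 : ∀ i : ℕ, A 1 i = b - t i) {s : ℝ}
    (hs : s ∈ insert 0 (Set.range t)) :
    StarProp A (linePoint a b s) ↔
      ∃ c d : ℝ, ∀ s' ∈ insert 0 (Set.range t), s' ≠ s → |c + d * s'| < |c + d * s| := by
  have hS := sbarSet_eq htlim hA0 hA1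
  rw [starProp_iff_of_sum_const hab (sum_mul_eq_of_mem_sbarSet htlim hA0 hA1)
    (hS ▸ Set.mem_image_of_mem _ hs), hS]
  simp only [Set.forall_mem_image, linePoint_injective.ne_iff]
  constructor
  · rintro ⟨β, hβ⟩
    refine ⟨β 0 * a + β 1 * b, β 0 - β 1, fun s' hs' hne => ?_⟩
    simpa only [sum_mul_linePoint] using hβ hs' hne
  · rintro ⟨c, d, h⟩
    obtain ⟨β, hβ⟩ := exists_sum_mul_linePoint_eq hab c d
    exact ⟨β, fun s' hs' hne => by simpa only [hβ] using h s' hs' hne⟩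

end Family

/-- for `ã₁ = (a + t₁, a + t₂, …)` and `ã₂ = (b − t₁, b − t₂, …)` with
`a, b > 0` and `(t_n)` strictly decreasing in `(0,1)` with `t_n → 0`, every element of `𝒮̄`
satisfies the weak `*`-Property, and the elements of `𝒮̄` satisfying the `*`-Property are
exactly `(a + t₁, b − t₁)` and `(a, b)`. -/
theorem stmt0 (a b : ℝ) (ha : 0 < a) (hb : 0 < b)
    (t : ℕ → ℝ) (ht01 : ∀ n, t n ∈ Set.Ioo (0 : ℝ) 1) (htanti : StrictAnti t)
    (htlim : Filter.Tendsto t Filter.atTop (nhds 0))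
    (A : Fin 2 → Linf) (hA0 : ∀ i : ℕ, A 0 i = a + t i) (hA1 : ∀ i : ℕ, A 1 i = b - t i) :
    (∀ x ∈ SbarSet A, WeakStarProp A x) ∧
    (∀ x ∈ SbarSet A, (StarProp A x ↔ x = ![a + t 0, b - t 0] ∨ x = ![a, b])) := by
  have hab : a + b ≠ 0 := (add_pos ha hb).ne'
  have ht : ∀ n, 0 < t n := fun n => (ht01 n).1
  refine ⟨fun x => weakStarProp_of_sum_const (sum_mul_eq_of_mem_sbarSet htlim hA0 hA1), ?_⟩
  rw [sbarSet_eq htlim hA0 hA1]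
  rintro _ ⟨s, hs, rfl⟩
  rw [starProp_linePoint_iff hab htlim hA0 hA1 hs, exists_forall_abs_lt_iff ht htanti hs,
    ← linePoint_zero (a := a) (b := b), linePoint_injective.eq_iff]
  exact or_congr_left linePoint_injective.eq_iff.symm
end
end

section
/- Let W be an m-dimensional subspace of ℓ∞ and let 𝒜 = {ã₁,…,ã_m} be a basis of W. Then the set of elements of 𝒮̄ satisfying the weak *-Property contains at least m pairwise nonequivalent elements (i.e., there exist a¹,…,a^m ∈ 𝒮̄, each satisfying the weak *-Property, with a^i ≠ ±a^j for i ≠ j). -/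
open scoped ENNReal

noncomputable section

lemma sbar_compact {m : ℕ} (a : Fin m → Linf) : IsCompact (SbarSet a) := by
  apply Bornology.IsBounded.isCompact_closure
  rw [Metric.isBounded_iff_subset_closedBall 0]
  refine ⟨∑ k, ‖a k‖, ?_⟩
  rintro _ ⟨i, rfl⟩
  rw [Metric.mem_closedBall, dist_zero_right]
  have hC : (0:ℝ) ≤ ∑ k, ‖a k‖ := Finset.sum_nonneg fun k _ => norm_nonneg _
  rw [pi_norm_le_iff_of_nonneg hC]
  intro k
  exact le_trans (lp.norm_apply_le_norm (by norm_num) (a k) i)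
    (Finset.single_le_sum (f := fun k => ‖a k‖) (fun k _ => norm_nonneg _) (Finset.mem_univ k))

lemma sbar_nonempty {m : ℕ} (a : Fin m → Linf) : (SbarSet a).Nonempty :=
  ⟨component a 0, subset_closure ⟨0, rfl⟩⟩

lemma dot_ne_zero {m : ℕ} (a : Fin m → Linf) (ha : LinearIndependent ℝ a)
    {β : Fin m → ℝ} (hβ : β ≠ 0) :
    ∃ b ∈ SbarSet a, ∑ k, β k * b k ≠ 0 := by
  by_contra h
  push_neg at h
  have h0 : ∀ i : ℕ, ∑ k, β k * a k i = 0 := fun i =>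
    h (component a i) (subset_closure ⟨i, rfl⟩)
  have hsum : ∑ k, β k • a k = 0 := by
    apply lp.ext
    funext i
    rw [lp.coeFn_sum]
    simp only [Finset.sum_apply, lp.coeFn_smul, Pi.smul_apply, smul_eq_mul]
    simpa using h0 i
  exact hβ (funext fun k => Fintype.linearIndependent_iff.mp ha β hsum k)

lemma step_exists {m j : ℕ} (a : Fin m → Linf) (ha : LinearIndependent ℝ a)
    (hj : j < m) (v : Fin j → (Fin m → ℝ)) (hv : LinearIndependent ℝ v) :
    ∃ x : Fin m → ℝ, WeakStarProp a x ∧ x ∉ Submodule.span ℝ (Set.range v) := by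
  -- find β orthogonal to all v i, β ≠ 0
  set v' : Fin j → EuclideanSpace ℝ (Fin m) := fun i => WithLp.toLp 2 (v i) with hv'
  set V : Submodule ℝ (EuclideanSpace ℝ (Fin m)) := Submodule.span ℝ (Set.range v') with hV
  have hdim : Module.finrank ℝ V ≤ j := by
    classical
    refine (finrank_span_le_card _).trans ?_
    rw [Set.toFinset_card]
    exact (Fintype.card_range_le v').trans (by simp)
  have hbot : Vᗮ ≠ ⊥ := by
    intro hb
    have := V.finrank_add_finrank_orthogonal
    rw [hb, finrank_bot, finrank_euclideanSpace_fin] at this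
    omega
  obtain ⟨β, hβV, hβ0⟩ := Submodule.exists_mem_ne_zero_of_ne_bot hbot
  have horth : ∀ i, ∑ k, β k * v i k = 0 := by
    intro i
    have := (Submodule.mem_orthogonal V β).mp hβV (v' i)
      (Submodule.subset_span ⟨i, rfl⟩)
    rw [PiLp.inner_apply] at this
    simpa [hv', mul_comm] using this
  have hβ0' : (β : Fin m → ℝ) ≠ 0 := fun h => hβ0 (by ext k; exact congrFun h k)
  -- maximize |⟨β, ·⟩| over SbarSet
  have hcont : Continuous fun b : Fin m → ℝ => |∑ k, β k * b k| :=
    continuous_abs.comp (continuous_finset_sum _ fun k _ =>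
      continuous_const.mul (continuous_apply k))
  obtain ⟨x, hx, hmax⟩ := (sbar_compact a).exists_isMaxOn (sbar_nonempty a) hcont.continuousOn
  obtain ⟨b, hb, hbne⟩ := dot_ne_zero a ha hβ0'
  have hpos : 0 < |∑ k, β k * x k| := lt_of_lt_of_le (abs_pos.mpr hbne) (hmax hb)
  refine ⟨x, ⟨hx, β, fun b hb' => hmax hb'.1⟩, ?_⟩
  intro hmem
  have hmem' : (WithLp.toLp 2 x : EuclideanSpace ℝ (Fin m)) ∈ V := by
    rw [hV]
    have : Submodule.span ℝ (Set.range v') = (Submodule.span ℝ (Set.range v)).map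
        (WithLp.linearEquiv 2 ℝ (Fin m → ℝ)).symm.toLinearMap := by
      rw [Submodule.map_span, ← Set.range_comp]; rfl
    rw [this]; exact ⟨x, hmem, rfl⟩
  have : ∑ k, β k * x k = 0 := by
    have h2 := (Submodule.mem_orthogonal V β).mp hβV (WithLp.toLp 2 x) hmem'
    rw [PiLp.inner_apply] at h2
    simpa [mul_comm] using h2
  rw [this] at hpos
  simp at hpos

lemma aux_ind {m : ℕ} (a : Fin m → Linf) (ha : LinearIndependent ℝ a) :
    ∀ j, j ≤ m → ∃ v : Fin j → (Fin m → ℝ),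
      LinearIndependent ℝ v ∧ ∀ i, WeakStarProp a (v i) := by
  intro j
  induction j with
  | zero => exact fun _ => ⟨Fin.elim0, linearIndependent_empty_type, fun i => i.elim0⟩
  | succ j ih =>
    intro hj
    obtain ⟨v, hv, hw⟩ := ih (by omega)
    obtain ⟨x, hx, hxs⟩ := step_exists a ha (by omega) v hv
    refine ⟨Fin.snoc v x, linearIndependent_fin_snoc.mpr ⟨hv, hxs⟩, ?_⟩
    intro i
    refine Fin.lastCases ?_ ?_ i
    · rw [Fin.snoc_last]; exact hx
    · intro i; rw [Fin.snoc_castSucc]; exact hw i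

/-- if `𝒜 = {ã₁, …, ã_m}` is a basis of an `m`-dimensional subspace of `ℓ∞`,
then there are at least `m` pairwise nonequivalent elements of `𝒮̄` satisfying the
weak `*`-Property. -/
theorem stmt1 (m : ℕ) (a : Fin m → Linf) (ha : LinearIndependent ℝ a) :
    ∃ v : Fin m → (Fin m → ℝ),
      (∀ i, v i ∈ SbarSet a ∧ WeakStarProp a (v i)) ∧
      (∀ i j, i ≠ j → v i ≠ v j ∧ v i ≠ -(v j)) := by
  obtain ⟨v, hv, hw⟩ := aux_ind a ha m le_rfl
  refine ⟨v, fun i => ⟨(hw i).1, hw i⟩, fun i j hij => ⟨?_, ?_⟩⟩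
  · exact fun h => hij (hv.injective h)
  · intro h
    set g : Fin m → ℝ := fun k => (if k = i then (1:ℝ) else 0) + (if k = j then 1 else 0)
      with hg
    have hsum : ∑ k, g k • v k = 0 := by
      simp only [hg, add_smul, ite_smul, one_smul, zero_smul, Finset.sum_add_distrib,
        Finset.sum_ite_eq', Finset.mem_univ, if_true]
      rw [h]; abel
    have := Fintype.linearIndependent_iff.mp hv g hsum i
    simp [hg, hij] at this
end
end

section
/- Let W be an m-dimensional subspace of ℓ∞ and let 𝒜 = {ã₁,…,ã_m} be a basis of W. Then for every β = (β₁,…,β_m) ∈ ℝ^m there exists an element (â₁,…,â_m) ∈ 𝒮̄ satisfying the weak *-Property such that ‖∑_{k=1}^m β_k ã_k‖_∞ = |∑_{k=1}^m β_k â_k|. -/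
open scoped ENNReal

noncomputable section

/-!
The components of `a` are bounded by `∑ ‖ã_k‖`, so `𝒮̄` is a nonempty compact subset of `ℝ^m`
and the continuous function `b ↦ |∑ β_k b̂_k|` attains its maximum on it at some `x`. Such a
maximiser satisfies the weak `*`-Property with this very `β`. Since the `i`-th coordinate of
`∑ β_k ã_k` is `∑ β_k a_i^k`, the sup norm is the supremum of this function over the components,
which by continuity equals its supremum over the closure `𝒮̄`, i.e. its value at `x`.
-/

namespace Linf

variable {m : ℕ} (a : Fin m → Linf)

lemma sum_smul_apply (β : Fin m → ℝ) (i : ℕ) :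
    (∑ k, β k • a k : Linf) i = ∑ k, β k * component a i k := by
  rw [lp.coeFn_sum]
  simp [component]

lemma norm_component_le (i : ℕ) : ‖component a i‖ ≤ ∑ k, ‖a k‖ :=
  (pi_norm_le_iff_of_nonneg (by positivity)).2 fun k =>
    (lp.norm_apply_le_norm ENNReal.top_ne_zero (a k) i).trans
      (Finset.single_le_sum (fun j _ => norm_nonneg (a j)) (Finset.mem_univ k))

lemma isCompact_sbarSet : IsCompact (SbarSet a) :=
  (isCompact_closedBall 0 (∑ k, ‖a k‖)).of_isClosed_subset isClosed_closure <|
    closure_minimal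
      (by rintro _ ⟨i, rfl⟩; simpa using norm_component_le a i) Metric.isClosed_closedBall

lemma sbarSet_nonempty : (SbarSet a).Nonempty :=
  ⟨component a 0, subset_closure ⟨0, rfl⟩⟩

lemma abs_sum_mul_le_norm_of_mem_sbarSet (β : Fin m → ℝ) {b : Fin m → ℝ}
    (hb : b ∈ SbarSet a) : |∑ k, β k * b k| ≤ ‖∑ k, β k • a k‖ := by
  have hclosed : IsClosed {b : Fin m → ℝ | |∑ k, β k * b k| ≤ ‖∑ k, β k • a k‖} :=
    isClosed_le (by fun_prop) continuous_const
  refine closure_minimal ?_ hclosed hb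
  rintro _ ⟨i, rfl⟩
  simpa [← sum_smul_apply] using
    lp.norm_apply_le_norm ENNReal.top_ne_zero (∑ k, β k • a k) i

lemma norm_sum_smul_le_of_isMaxOn (β : Fin m → ℝ) {x : Fin m → ℝ}
    (hmax : IsMaxOn (fun b : Fin m → ℝ => |∑ k, β k * b k|) (SbarSet a) x) :
    ‖∑ k, β k • a k‖ ≤ |∑ k, β k * x k| :=
  lp.norm_le_of_forall_le (abs_nonneg _) fun i => by
    rw [sum_smul_apply, Real.norm_eq_abs]
    exact hmax (subset_closure ⟨i, rfl⟩)

lemma weakStarProp_of_isMaxOn {β x : Fin m → ℝ} (hx : x ∈ SbarSet a)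
    (hmax : IsMaxOn (fun b : Fin m → ℝ => |∑ k, β k * b k|) (SbarSet a) x) :
    WeakStarProp a x :=
  ⟨hx, β, fun _ hb => hmax hb.1⟩

end Linf

theorem stmt2_general (m : ℕ) (a : Fin m → Linf)
    (β : Fin m → ℝ) :
    ∃ x : Fin m → ℝ, x ∈ SbarSet a ∧ WeakStarProp a x ∧
      ‖∑ k, β k • a k‖ = |∑ k, β k * x k| := by
  obtain ⟨x, hx, hmax⟩ := (Linf.isCompact_sbarSet a).exists_isMaxOn (Linf.sbarSet_nonempty a)
    (f := fun b : Fin m → ℝ => |∑ k, β k * b k|) (by fun_prop)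
  exact ⟨x, hx, Linf.weakStarProp_of_isMaxOn a hx hmax,
    (Linf.norm_sum_smul_le_of_isMaxOn a β hmax).antisymm
      (Linf.abs_sum_mul_le_norm_of_mem_sbarSet a β hx)⟩

/-- if `𝒜 = {ã₁, …, ã_m}` is a basis of an `m`-dimensional subspace of `ℓ∞`,
then for every `β ∈ ℝ^m` there is an element `x ∈ 𝒮̄` satisfying the weak `*`-Property with
`‖∑ β_k ã_k‖∞ = |∑ β_k x̂_k|`. -/
theorem stmt2 (m : ℕ) (a : Fin m → Linf) (ha : LinearIndependent ℝ a)
    (β : Fin m → ℝ) :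
    ∃ x : Fin m → ℝ, x ∈ SbarSet a ∧ WeakStarProp a x ∧
      ‖∑ k, β k • a k‖ = |∑ k, β k * x k| :=
  stmt2_general m a β
end
end

section
/- Let W be an m-dimensional subspace of ℓ∞ with basis 𝒜 = {ã₁,…,ã_m}. Suppose the set of elements of 𝒮̄ satisfying the weak *-Property consists of exactly r nonequivalent elements, i.e., it equals E_{a¹} ∪ ⋯ ∪ E_{aʳ} for some a¹,…,aʳ ∈ 𝒮̄ with a^i ≠ ±a^j for i ≠ j. Then there exists a linear isometry from W into ℓ∞^r (so W can be isometrically embedded into ℓ∞^r). -/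
open scoped ENNReal

noncomputable section

lemma coe_sum_apply {m : ℕ} (a : Fin m → Linf) (β : Fin m → ℝ) (n : ℕ) :
    (↑(∑ k, β k • a k) : ∀ _ : ℕ, ℝ) n = ∑ k, β k * a k n := by
  rw [lp.coeFn_sum]
  simp [lp.coeFn_smul]

lemma key {m r : ℕ} (a : Fin m → Linf) (c : Fin r → (Fin m → ℝ))
    (hc : ∀ i, c i ∈ SbarSet a)
    (hcover : {x | WeakStarProp a x} = ⋃ i, EquivClass a (c i))
    (β : Fin m → ℝ) :
    ‖∑ k, β k • a k‖ = ‖(fun i => ∑ k, β k * c i k : Fin r → ℝ)‖ := by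
  set f : (Fin m → ℝ) → ℝ := fun b => |∑ k, β k * b k| with hf
  have hfc : Continuous f := by
    apply continuous_abs.comp
    exact continuous_finset_sum _ fun k _ => (continuous_const.mul (continuous_apply k))
  have hne : (SbarSet a).Nonempty := ⟨component a 0, subset_closure ⟨0, rfl⟩⟩
  obtain ⟨b₀, hb₀S, hb₀max⟩ := (sbar_compact a).exists_isMaxOn hne hfc.continuousOn
  set g : Linf := ∑ k, β k • a k with hg
  -- each component value of g bounded by f b₀ and conversely
  have hgn : ∀ n, ‖(g : ∀ _ : ℕ, ℝ) n‖ = f (component a n) := by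
    intro n; rw [coe_sum_apply]; rfl
  have h1 : ‖g‖ ≤ f b₀ := by
    apply lp.norm_le_of_forall_le (abs_nonneg _)
    intro n
    rw [hgn n]
    exact hb₀max (subset_closure ⟨n, rfl⟩)
  have h2 : f b₀ ≤ ‖g‖ := by
    have hsub : SbarSet a ⊆ {b | f b ≤ ‖g‖} := by
      apply closure_minimal ?_ (isClosed_le hfc continuous_const)
      rintro _ ⟨n, rfl⟩
      simp only [Set.mem_setOf_eq]
      rw [← hgn n]
      exact lp.norm_apply_le_norm ENNReal.top_ne_zero g n
    exact hsub hb₀S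
  -- b₀ has the weak star property
  have hwsp : WeakStarProp a b₀ := ⟨hb₀S, β, fun b hb => hb₀max hb.1⟩
  have : b₀ ∈ ⋃ i, EquivClass a (c i) := hcover ▸ hwsp
  obtain ⟨i, hiS, hi⟩ := Set.mem_iUnion.mp this
  have hfb₀ : f b₀ = f (c i) := by
    rcases hi with h | h <;> subst h <;> simp only [hf]
    rw [show (∑ k, β k * (-c i) k) = -∑ k, β k * c i k by simp [mul_neg], abs_neg]
  have h3 : f b₀ = ‖(fun i => ∑ k, β k * c i k : Fin r → ℝ)‖ := by
    apply le_antisymm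
    · rw [hfb₀]
      exact norm_le_pi_norm (fun i => ∑ k, β k * c i k : Fin r → ℝ) i
    · rw [pi_norm_le_iff_of_nonneg (abs_nonneg _)]
      intro j
      exact hb₀max (hc j)
  rw [← h3]; exact le_antisymm h1 h2

/-- if the set of elements of `𝒮̄` satisfying the weak `*`-Property is exactly
`E_{c 1} ∪ ⋯ ∪ E_{c r}` for pairwise nonequivalent `c 1, …, c r ∈ 𝒮̄`, then the subspace
`W = span 𝒜` of `ℓ∞` embeds linearly isometrically into `ℓ∞^r`. -/
theorem stmt3 (m r : ℕ) (a : Fin m → Linf) (ha : LinearIndependent ℝ a)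
    (c : Fin r → (Fin m → ℝ)) (hc : ∀ i, c i ∈ SbarSet a)
    (hpair : ∀ i j, i ≠ j → c i ≠ c j ∧ c i ≠ -(c j))
    (hcover : {x | WeakStarProp a x} = ⋃ i, EquivClass a (c i)) :
    Nonempty ((Submodule.span ℝ (Set.range a)) →ₗᵢ[ℝ] (Fin r → ℝ)) := by
  classical
  let B : Module.Basis (Fin m) ℝ (Submodule.span ℝ (Set.range a)) := Module.Basis.span ha
  let L := B.constr ℝ (fun k => (fun i => c i k : Fin r → ℝ))
  refine ⟨⟨L, ?_⟩⟩
  intro w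
  set β : Fin m → ℝ := fun k => B.repr w k with hβ
  have hw : (w : Linf) = ∑ k, β k • a k := by
    conv_lhs => rw [← B.sum_repr w]
    rw [Submodule.coe_sum]
    exact Finset.sum_congr rfl fun k _ => by
      rw [Submodule.coe_smul]
      congr 1
      exact congrArg Subtype.val (Module.Basis.span_apply ha k)
  have hLw : L w = fun i => ∑ k, β k * c i k := by
    conv_lhs => rw [← B.sum_repr w]
    rw [map_sum]
    funext i
    rw [Finset.sum_apply]
    refine Finset.sum_congr rfl fun k _ => ?_
    rw [map_smul]
    simp [L, Module.Basis.constr_basis, hβ]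
  rw [hLw]
  have h0 : ‖w‖ = ‖(w : Linf)‖ := rfl
  rw [h0, hw]
  exact (key a c hc hcover β).symm
end
end

section
/- Let Y be an m-dimensional subspace of ℓ∞ with basis 𝒜 = {ã₁,…,ã_m}. If Y is polyhedral, i.e., the set of extreme points of the closed unit ball of Y is finite, then the set of elements of 𝒮̄ satisfying the *-Property consists of only finitely many pairwise nonequivalent elements (it is covered by finitely many equivalence classes E_a). -/
open scoped ENNReal

noncomputable section

section Aux

open Set Metric

variable {m : ℕ}

/-- The "dual ball" of the family `a` in `ℝ^m`. -/
private def BSet (a : Fin m → Linf) : Set (Fin m → ℝ) :=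
  {c | ∀ b ∈ SbarSet a, |∑ k, c k * b k| ≤ 1}

private lemma mem_BSet (a : Fin m → Linf) (c : Fin m → ℝ) :
    c ∈ BSet a ↔ ∀ b ∈ SbarSet a, |∑ k, c k * b k| ≤ 1 := Iff.rfl

private lemma mem_BSet_iff (a : Fin m → Linf) (c : Fin m → ℝ) :
    c ∈ BSet a ↔ ∀ i : ℕ, |∑ k, c k * a k i| ≤ 1 := by
  constructor
  · intro h i
    exact h (component a i) (subset_closure ⟨i, rfl⟩)
  · intro h b hb
    have hcl : IsClosed {b : Fin m → ℝ | |∑ k, c k * b k| ≤ 1} :=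
      isClosed_le (by fun_prop) continuous_const
    have hsub : SbarSet a ⊆ {b : Fin m → ℝ | |∑ k, c k * b k| ≤ 1} := by
      refine closure_minimal ?_ hcl
      rintro b ⟨i, rfl⟩
      exact h i
    exact hsub hb

private lemma norm_sum_le_one_iff (a : Fin m → Linf) (c : Fin m → ℝ) :
    ‖(∑ k, c k • a k : Linf)‖ ≤ 1 ↔ ∀ i : ℕ, |∑ k, c k * a k i| ≤ 1 := by
  have hcoe : ∀ i : ℕ, (∑ k, c k • a k : Linf) i = ∑ k, c k * a k i := by
    intro i
    simp [lp.coeFn_sum, Finset.sum_apply, lp.coeFn_smul, Pi.smul_apply]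
    exact Finset.sum_apply (M := fun _ : ℕ => ℝ) i _ _
  constructor
  · intro h i
    have h2 := lp.norm_apply_le_norm (by norm_num : (∞ : ℝ≥0∞) ≠ 0)
      (∑ k, c k • a k : Linf) i
    rw [hcoe i, Real.norm_eq_abs] at h2
    exact h2.trans h
  · intro h
    refine lp.norm_le_of_forall_le zero_le_one fun i => ?_
    rw [hcoe i, Real.norm_eq_abs]
    exact h i

private lemma convex_BSet (a : Fin m → Linf) : Convex ℝ (BSet a) := by
  intro c hc d hd s t hs ht hst
  intro b hb
  have h1 : |∑ k, c k * b k| ≤ 1 := hc b hb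
  have h2 : |∑ k, d k * b k| ≤ 1 := hd b hb
  have hsum : ∑ k, (s • c + t • d) k * b k
      = s * (∑ k, c k * b k) + t * (∑ k, d k * b k) := by
    simp [Finset.mul_sum, ← Finset.sum_add_distrib, add_mul, mul_assoc]
  rw [hsum]
  have habs : |s * (∑ k, c k * b k) + t * (∑ k, d k * b k)|
      ≤ s * |∑ k, c k * b k| + t * |∑ k, d k * b k| := by
    refine (abs_add_le _ _).trans ?_
    rw [abs_mul, abs_mul, abs_of_nonneg hs, abs_of_nonneg ht]
  nlinarith [abs_nonneg (∑ k, c k * b k), abs_nonneg (∑ k, d k * b k)]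

set_option synthInstance.maxHeartbeats 1000000 in
set_option maxHeartbeats 2000000 in
private lemma BSet_compact_and_finite (a : Fin m → Linf) (ha : LinearIndependent ℝ a)
    (hpoly : (Set.extremePoints ℝ
      (Metric.closedBall (0 : Submodule.span ℝ (Set.range a)) 1)).Finite) :
    IsCompact (BSet a) ∧ (Set.extremePoints ℝ (BSet a)).Finite := by
  classical
  haveI : FiniteDimensional ℝ (Submodule.span ℝ (Set.range a)) :=
    FiniteDimensional.span_of_finite ℝ (Set.finite_range a)
  set L : (Fin m → ℝ) →ₗ[ℝ] Linf := Fintype.linearCombination ℝ a with hL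
  have hLapp : ∀ c, L c = ∑ k, c k • a k := fun c => rfl
  have hinj : Function.Injective L := by
    intro c d hcd
    have h0 : L (c - d) = 0 := by rw [map_sub, hcd, sub_self]
    have hz : ∀ i, (c - d) i = 0 := by
      refine Fintype.linearIndependent_iff.mp ha (c - d) ?_
      simpa [hLapp] using h0
    funext i
    have := hz i
    rwa [Pi.sub_apply, sub_eq_zero] at this
  have hrange : LinearMap.range L = Submodule.span ℝ (Set.range a) :=
    Fintype.range_linearCombination ℝ a
  let e : (Fin m → ℝ) ≃ₗ[ℝ] Submodule.span ℝ (Set.range a) :=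
    (LinearEquiv.ofInjective L hinj).trans (LinearEquiv.ofEq _ _ hrange)
  have hecoe : ∀ c, ((e c : Submodule.span ℝ (Set.range a)) : Linf) = ∑ k, c k • a k :=
    fun c => rfl
  have himg : e.symm '' Metric.closedBall (0 : Submodule.span ℝ (Set.range a)) 1 = BSet a := by
    ext c
    constructor
    · rintro ⟨y, hy, rfl⟩
      rw [mem_BSet_iff, ← norm_sum_le_one_iff, ← hecoe (e.symm y), e.apply_symm_apply]
      rwa [Metric.mem_closedBall, dist_zero_right] at hy
    · intro hc
      refine ⟨e c, ?_, e.symm_apply_apply c⟩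
      rw [Metric.mem_closedBall, dist_zero_right]
      show ‖((e c : Submodule.span ℝ (Set.range a)) : Linf)‖ ≤ 1
      rw [hecoe, norm_sum_le_one_iff]
      exact (mem_BSet_iff a c).mp hc
  have hcont : Continuous (e.symm : Submodule.span ℝ (Set.range a) → (Fin m → ℝ)) :=
    LinearMap.continuous_of_finiteDimensional e.symm.toLinearMap
  constructor
  · rw [← himg]
    exact (isCompact_closedBall _ _).image hcont
  · rw [← himg, ← image_extremePoints]
    exact hpoly.image _

private lemma starProp_finite (a : Fin m → Linf)
    (hBconv : Convex ℝ (BSet a)) (hBcomp : IsCompact (BSet a))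
    (hBfin : (Set.extremePoints ℝ (BSet a)).Finite) :
    {x | StarProp a x}.Finite := by
  classical
  by_cases hdeg : ∃ x₀, x₀ ∈ SbarSet a ∧ SbarSet a \ EquivClass a x₀ = ∅
  · obtain ⟨x₀, _, hsub⟩ := hdeg
    refine Set.Finite.subset (((Set.finite_singleton (-x₀)).insert x₀)) ?_
    intro x hx
    have hxS : x ∈ SbarSet a := hx.1
    have hxE : x ∈ EquivClass a x₀ := by
      by_contra h
      have : x ∈ SbarSet a \ EquivClass a x₀ := ⟨hxS, h⟩
      rw [hsub] at this
      exact this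
    rcases hxE.2 with h | h <;> simp [h]
  · push_neg at hdeg
    have hne : ∀ x, x ∈ SbarSet a → (SbarSet a \ EquivClass a x).Nonempty := by
      intro x hx
      exact hdeg x hx
    set B := BSet a with hB
    set G : (Fin m → ℝ) → Set (Fin m → ℝ) :=
      fun x => {c ∈ B | ∑ k, c k * x k = 1} with hG
    -- normalized exposing functional
    have gamma : ∀ x, StarProp a x →
        ∃ γ ∈ G x, ∀ b ∈ SbarSet a \ EquivClass a x, |∑ k, γ k * b k| < 1 := by
      rintro x ⟨hxS, β, hβ⟩
      obtain ⟨b₀, hb₀⟩ := hne x hxS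
      set t := ∑ k, β k * x k with ht
      have ht0 : t ≠ 0 := by
        have h1 := hβ b₀ hb₀
        have : 0 < |t| := lt_of_le_of_lt (abs_nonneg _) h1
        exact abs_pos.mp this
      have habs : 0 < |t| := abs_pos.mpr ht0
      have hcomp : ∀ b : Fin m → ℝ, ∑ k, (t⁻¹ • β) k * b k = t⁻¹ * ∑ k, β k * b k := by
        intro b
        simp [Finset.mul_sum, mul_assoc]
      have hγx : ∑ k, (t⁻¹ • β) k * x k = 1 := by
        rw [hcomp, ← ht, inv_mul_cancel₀ ht0]
      have hγlt : ∀ b ∈ SbarSet a \ EquivClass a x, |∑ k, (t⁻¹ • β) k * b k| < 1 := by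
        intro b hb
        have h1 := hβ b hb
        rw [hcomp, abs_mul, abs_inv, inv_mul_eq_div]
        exact (div_lt_one habs).mpr h1
      have hγB : t⁻¹ • β ∈ B := by
        intro b hb
        by_cases hbe : b ∈ EquivClass a x
        · rcases hbe.2 with rfl | rfl
          · rw [hγx, abs_one]
          · have : ∑ k, (t⁻¹ • β) k * (-x) k = -1 := by
              have : ∑ k, (t⁻¹ • β) k * (-x) k = -∑ k, (t⁻¹ • β) k * x k := by
                simp [mul_neg]
              rw [this, hγx]
            rw [this, abs_neg, abs_one]
        · exact le_of_lt (hγlt b ⟨hb, hbe⟩)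
      exact ⟨t⁻¹ • β, ⟨hγB, hγx⟩, hγlt⟩
    -- each face is the convex hull of the extreme points of B it contains
    have hull : ∀ x, StarProp a x →
        G x = convexHull ℝ (G x ∩ Set.extremePoints ℝ B) := by
      intro x hx
      obtain ⟨γ, hγG, _⟩ := gamma x hx
      have hxS := hx.1
      let lf : (Fin m → ℝ) →ₗ[ℝ] ℝ :=
        { toFun := fun c => ∑ k, c k * x k
          map_add' := fun c d => by simp [add_mul, Finset.sum_add_distrib]
          map_smul' := fun r c => by simp [Finset.mul_sum, mul_assoc] }
      let l : (Fin m → ℝ) →L[ℝ] ℝ := LinearMap.toContinuousLinearMap lf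
      have hl : ∀ c, l c = ∑ k, c k * x k := fun _ => rfl
      have hle : ∀ c ∈ B, l c ≤ 1 := by
        intro c hc
        exact le_trans (le_abs_self _) (hc x hxS)
      have hexp : IsExposed ℝ B (G x) := by
        intro _
        refine ⟨l, ?_⟩
        ext c
        constructor
        · rintro ⟨hcB, hc1⟩
          refine ⟨hcB, fun d hd => ?_⟩
          rw [hl c, hc1]
          exact hle d hd
        · rintro ⟨hcB, hmax⟩
          refine ⟨hcB, le_antisymm (hle c hcB) ?_⟩
          have h1 := hmax γ hγG.1
          rw [hl γ, hγG.2] at h1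
          exact h1
      have hGeq : G x = B ∩ {c : Fin m → ℝ | ∑ k, c k * x k = 1} := rfl
      have hclosed1 : IsClosed {c : Fin m → ℝ | ∑ k, c k * x k = 1} :=
        isClosed_eq (by fun_prop) continuous_const
      have hGcomp : IsCompact (G x) := by
        rw [hGeq]; exact hBcomp.inter_right hclosed1
      have hGconv : Convex ℝ (G x) := by
        rw [hGeq]
        refine hBconv.inter ?_
        exact convex_hyperplane (lf.isLinear) 1
      have hext : (G x).extremePoints ℝ = G x ∩ Set.extremePoints ℝ B :=
        hexp.isExtreme.extremePoints_eq
      have hmink := closure_convexHull_extremePoints hGcomp hGconv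
      rw [hext] at hmink
      have hfin2 : (G x ∩ Set.extremePoints ℝ B).Finite := hBfin.inter_of_right _
      rw [(hfin2.isClosed_convexHull ℝ).closure_eq] at hmink
      exact hmink.symm
    -- injectivity up to sign
    have hinj2 : ∀ x, StarProp a x → ∀ y, StarProp a y →
        G x ∩ Set.extremePoints ℝ B = G y ∩ Set.extremePoints ℝ B → y = x ∨ y = -x := by
      intro x hx y hy hVeq
      have hGeq : G x = G y := by rw [hull x hx, hull y hy, hVeq]
      obtain ⟨γ, hγG, hγlt⟩ := gamma x hx
      have hγGy : γ ∈ G y := hGeq ▸ hγG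
      by_contra hcon
      push_neg at hcon
      have hyE : y ∉ EquivClass a x := fun h => by
        rcases h.2 with h' | h'
        · exact hcon.1 h'
        · exact hcon.2 h'
      have hlt := hγlt y ⟨hy.1, hyE⟩
      rw [hγGy.2, abs_one] at hlt
      exact lt_irrefl 1 hlt
    -- finiteness via covering by fibers
    have hcover : {x | StarProp a x} ⊆
        ⋃ t ∈ {t : Set (Fin m → ℝ) | t ⊆ Set.extremePoints ℝ B},
          {x | StarProp a x ∧ G x ∩ Set.extremePoints ℝ B = t} := by
      intro x hx
      exact Set.mem_biUnion Set.inter_subset_right ⟨hx, rfl⟩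
    refine Set.Finite.subset (Set.Finite.biUnion hBfin.finite_subsets ?_) hcover
    intro t _
    rcases Set.eq_empty_or_nonempty
        {x | StarProp a x ∧ G x ∩ Set.extremePoints ℝ B = t} with h | ⟨x, hx⟩
    · rw [h]; exact Set.finite_empty
    · refine Set.Finite.subset (((Set.finite_singleton (-x)).insert x)) ?_
      rintro y ⟨hy, hyt⟩
      rcases hinj2 x hx.1 y hy (by rw [hyt, hx.2]) with h | h <;> simp [h]

end Aux

/-- if the `m`-dimensional subspace `Y = span 𝒜` of `ℓ∞` is polyhedral
(its closed unit ball has finitely many extreme points), then the set of elements of `𝒮̄`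
satisfying the `*`-Property is covered by finitely many equivalence classes `E_y`. -/
theorem stmt8 (m : ℕ) (a : Fin m → Linf) (ha : LinearIndependent ℝ a)
    (hpoly : (Set.extremePoints ℝ
      (Metric.closedBall (0 : Submodule.span ℝ (Set.range a)) 1)).Finite) :
    ∃ T : Finset (Fin m → ℝ), ∀ x, StarProp a x → ∃ y ∈ T, x = y ∨ x = -y := by
  obtain ⟨hcomp, hfin⟩ := BSet_compact_and_finite a ha hpoly
  have hPfin : {x | StarProp a x}.Finite := starProp_finite a (convex_BSet a) hcomp hfin
  refine ⟨hPfin.toFinset, fun x hx => ⟨x, ?_, Or.inl rfl⟩⟩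
  simpa using hx
end
end

section
/- Let ã₁ = (cos(π/2), cos(π/4), …, cos(π/(2n)), …) and ã₂ = (sin(π/2), sin(π/4), …, sin(π/(2n)), …) be the elements of ℓ∞ whose n-th entries are cos(π/(2n)) and sin(π/(2n)) respectively, and let Y = span{ã₁, ã₂}. Then Y is not polyhedral: the set of extreme points of the closed unit ball of Y is infinite, and consequently for every n ∈ ℕ there is no linear isometry from Y into ℓ∞^n. -/
open scoped ENNReal
open Real

noncomputable section

namespace Stmt9

/-- the angles π / (2(i+1)) -/
def th (i : ℕ) : ℝ := π / (2 * ((i : ℝ) + 1))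

lemma th_pos (i : ℕ) : 0 < th i := div_pos pi_pos (by positivity)

lemma th_le_pi_div_two (i : ℕ) : th i ≤ π / 2 := by
  unfold th
  rw [div_le_div_iff₀ (by positivity) two_pos]
  have : (0:ℝ) ≤ (i:ℝ) := Nat.cast_nonneg i
  nlinarith [pi_pos]

lemma th_lt_th {i j : ℕ} (h : i < j) : th j < th i := by
  unfold th
  apply div_lt_div_of_pos_left pi_pos (by positivity)
  have : (i : ℝ) < (j : ℝ) := by exact_mod_cast h
  linarith

lemma th_le_th {i j : ℕ} (h : i ≤ j) : th j ≤ th i := by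
  rcases eq_or_lt_of_le h with rfl | h
  · exact le_refl _
  · exact (th_lt_th h).le

def bb (i : ℕ) : ℝ := (th i + th (i + 1)) / 2
def gg (i : ℕ) : ℝ := (th i - th (i + 1)) / 2

lemma gg_pos (i : ℕ) : 0 < gg i := by
  have := th_lt_th (Nat.lt_succ_self i); unfold gg; linarith

lemma gg_lt (i : ℕ) : gg i < π / 2 := by
  have h1 := th_le_pi_div_two i
  have h2 := th_pos (i + 1)
  unfold gg; linarith [pi_pos]

lemma cos_gg_pos (i : ℕ) : 0 < Real.cos (gg i) :=
  Real.cos_pos_of_mem_Ioo ⟨by linarith [gg_pos i, pi_pos], gg_lt i⟩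

lemma bb_pos (i : ℕ) : 0 < bb i := by
  have := th_pos i; have := th_pos (i+1); unfold bb; linarith

lemma bb_lt (i : ℕ) : bb i < π / 2 := by
  have h1 := th_le_pi_div_two i
  have h2 := th_lt_th (Nat.lt_succ_self i)
  unfold bb; linarith


section WithA

variable {a : Fin 2 → Linf}

/-- The span. -/
abbrev Y (a : Fin 2 → Linf) : Submodule ℝ Linf := Submodule.span ℝ (Set.range a)

/-- the generators as elements of `Y`. -/
def A (a : Fin 2 → Linf) (k : Fin 2) : Y a := ⟨a k, Submodule.subset_span ⟨k, rfl⟩⟩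

lemma exists_rep {x : Linf} (hx : x ∈ Y a) : ∃ s t : ℝ, s • a 0 + t • a 1 = x := by
  rw [Submodule.mem_span_range_iff_exists_fun] at hx
  obtain ⟨c, hc⟩ := hx
  exact ⟨c 0, c 1, by rw [← hc, Fin.sum_univ_two]⟩

variable (h0 : ∀ i : ℕ, a 0 i = Real.cos (Real.pi / (2 * ((i : ℝ) + 1))))
variable (h1 : ∀ i : ℕ, a 1 i = Real.sin (Real.pi / (2 * ((i : ℝ) + 1))))

include h0 h1 in
lemma coord_comb (s t : ℝ) (j : ℕ) :
    (s • a 0 + t • a 1) j = s * Real.cos (th j) + t * Real.sin (th j) := by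
  rw [lp.coeFn_add, lp.coeFn_smul, lp.coeFn_smul]
  simp only [Pi.add_apply, Pi.smul_apply, smul_eq_mul]
  rw [h0 j, h1 j]; rfl

lemma th_zero : th 0 = π / 2 := by unfold th; norm_num

lemma th_one : th 1 = π / 4 := by
  unfold th; norm_num

include h0 h1 in
lemma coord_zero_one (s t : ℝ) :
    (s • a 0 + t • a 1) 0 = t ∧ (s • a 0 + t • a 1) 1 = (s + t) * (Real.sqrt 2 / 2) := by
  constructor
  · rw [coord_comb h0 h1, th_zero, Real.cos_pi_div_two, Real.sin_pi_div_two]; ring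
  · rw [coord_comb h0 h1, th_one, Real.cos_pi_div_four, Real.sin_pi_div_four]; ring

include h0 h1 in
lemma indep {s t : ℝ} (h : s • a 0 + t • a 1 = 0) : s = 0 ∧ t = 0 := by
  obtain ⟨c0, c1⟩ := coord_zero_one h0 h1 (a := a) s t
  rw [h] at c0 c1
  have z0 : (0 : Linf) 0 = 0 := by rw [lp.coeFn_zero]; rfl
  have z1 : (0 : Linf) 1 = 0 := by rw [lp.coeFn_zero]; rfl
  rw [z0] at c0; rw [z1] at c1
  have ht : t = 0 := c0.symm
  have hsq : 0 < Real.sqrt 2 := by positivity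
  constructor
  · subst ht
    have : s * (Real.sqrt 2 / 2) = 0 := by linarith [c1.symm]
    rcases mul_eq_zero.1 this with h | h
    · exact h
    · linarith
  · exact ht

/-- the coefficient functionals -/
def Pc (z : Y a) : ℝ := Real.sqrt 2 * (z : Linf) 1 - (z : Linf) 0

def Qc (z : Y a) : ℝ := (z : Linf) 0

include h0 h1 in
lemma rep (z : Y a) : Pc z • A a 0 + Qc z • A a 1 = z := by
  obtain ⟨s, t, hst⟩ := exists_rep z.2
  obtain ⟨c0, c1⟩ := coord_zero_one h0 h1 (a := a) s t
  rw [hst] at c0 c1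
  have hsq : Real.sqrt 2 * Real.sqrt 2 = 2 := Real.mul_self_sqrt (by norm_num)
  have hP : Pc z = s := by unfold Pc; rw [c0, c1]; linear_combination ((s + t) / 2) * hsq
  have hQ : Qc z = t := by unfold Qc; rw [c0]
  apply Subtype.ext
  rw [Submodule.coe_add, Submodule.coe_smul, Submodule.coe_smul, hP, hQ]
  show s • a 0 + t • a 1 = ↑z
  exact hst

include h0 h1 in
lemma lin_rep (f : Y a →ₗ[ℝ] ℝ) (z : Y a) :
    f z = Pc z * f (A a 0) + Qc z * f (A a 1) := by
  conv_lhs => rw [← rep h0 h1 z]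
  rw [map_add, map_smul, map_smul, smul_eq_mul, smul_eq_mul]

/-- vertex coefficients -/
def sc (i : ℕ) : ℝ := Real.cos (bb i) / Real.cos (gg i)
def tc (i : ℕ) : ℝ := Real.sin (bb i) / Real.cos (gg i)

/-- the vertices, in `Linf` -/
def u (a : Fin 2 → Linf) (i : ℕ) : Linf := sc i • a 0 + tc i • a 1

/-- the vertices, in `Y` -/
def v (a : Fin 2 → Linf) (i : ℕ) : Y a :=
  ⟨u a i, Submodule.add_mem _
    (Submodule.smul_mem _ _ (Submodule.subset_span ⟨0, rfl⟩))
    (Submodule.smul_mem _ _ (Submodule.subset_span ⟨1, rfl⟩))⟩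

include h0 h1 in
lemma u_coord (i j : ℕ) : (u a i) j = Real.cos (th j - bb i) / Real.cos (gg i) := by
  rw [u, coord_comb h0 h1, Real.cos_sub, sc, tc]
  have := (cos_gg_pos i).ne'
  field_simp

include h0 h1 in
lemma u_coord_abs_le (i j : ℕ) : |(u a i) j| ≤ 1 := by
  rw [u_coord h0 h1]
  have hcg := cos_gg_pos i
  have hb1 := bb_pos i
  have hb2 := bb_lt i
  have ht1 := th_pos j
  have ht2 := th_le_pi_div_two j
  have hcos_nonneg : 0 ≤ Real.cos (th j - bb i) :=
    Real.cos_nonneg_of_mem_Icc ⟨by linarith, by linarith⟩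
  have habs : gg i ≤ |th j - bb i| := by
    rcases le_or_gt j i with hji | hij
    · have := th_le_th hji
      have hx : gg i ≤ th j - bb i := by unfold gg bb; unfold gg bb at *; linarith
      exact le_abs.2 (Or.inl hx)
    · have := th_le_th (Nat.succ_le_of_lt hij)
      have hx : gg i ≤ -(th j - bb i) := by unfold gg bb; unfold gg bb at *; linarith
      exact le_abs.2 (Or.inr hx)
  have hle : Real.cos (th j - bb i) ≤ Real.cos (gg i) := by
    rw [← Real.cos_abs (th j - bb i)]
    apply Real.cos_le_cos_of_nonneg_of_le_pi (gg_pos i).le _ habs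
    rw [abs_le]
    constructor
    · linarith [pi_pos]
    · linarith [pi_pos]
  rw [abs_div, abs_of_nonneg hcos_nonneg, abs_of_pos hcg, div_le_one hcg]
  exact hle

include h0 h1 in
lemma u_coord_self (i : ℕ) : (u a i) i = 1 := by
  rw [u_coord h0 h1]
  have : th i - bb i = gg i := by unfold bb gg; ring
  rw [this, div_self (cos_gg_pos i).ne']

include h0 h1 in
lemma u_coord_succ (i : ℕ) : (u a i) (i + 1) = 1 := by
  rw [u_coord h0 h1]
  have : th (i + 1) - bb i = -(gg i) := by unfold bb gg; ring
  rw [this, Real.cos_neg, div_self (cos_gg_pos i).ne']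

include h0 h1 in
lemma u_coord_lt {i j : ℕ} (h : j < i) : (u a i) j < 1 := by
  rw [u_coord h0 h1]
  have hcg := cos_gg_pos i
  rw [div_lt_one hcg]
  have hth := th_lt_th h
  have hb2 := bb_lt i
  have ht2 := th_le_pi_div_two j
  have hlt : gg i < th j - bb i := by
    have : th i < th j := hth
    unfold gg bb; unfold gg bb at *; linarith
  apply Real.cos_lt_cos_of_nonneg_of_le_pi (gg_pos i).le _ hlt
  linarith [pi_pos, th_pos j, bb_pos i]

include h0 h1 in
lemma norm_v_le (i : ℕ) : ‖v a i‖ ≤ 1 := by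
  show ‖u a i‖ ≤ 1
  apply lp.norm_le_of_forall_le zero_le_one
  intro j
  rw [Real.norm_eq_abs]
  exact u_coord_abs_le h0 h1 i j

lemma coord_abs_le_of_ball {x : Y a} (hx : ‖x‖ ≤ 1) (j : ℕ) : |(x : Linf) j| ≤ (1:ℝ) := by
  have h1 : |(x : Linf) j| ≤ ‖(x : Linf)‖ := by
    rw [← Real.norm_eq_abs]
    exact lp.norm_apply_le_norm ENNReal.top_ne_zero (x : Linf) j
  exact h1.trans hx

lemma combo_one {c d p q : ℝ} (hc : 0 < c) (hd : 0 < d) (hcd : c + d = 1)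
    (hp : p ≤ 1) (hq : q ≤ 1) (h : c * p + d * q = 1) : p = 1 ∧ q = 1 := by
  constructor <;> nlinarith

lemma coord_add_smul (x y : Y a) (c d : ℝ) (j : ℕ) :
    ((c • x + d • y : Y a) : Linf) j = c * (x : Linf) j + d * (y : Linf) j := by
  rw [Submodule.coe_add, Submodule.coe_smul, Submodule.coe_smul,
    lp.coeFn_add, lp.coeFn_smul, lp.coeFn_smul]
  simp

include h0 h1 in
lemma v_extreme (i : ℕ) :
    v a i ∈ Set.extremePoints ℝ (Metric.closedBall (0 : Y a) 1) := by
  rw [mem_extremePoints]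
  constructor
  · rw [mem_closedBall_zero_iff]
    exact norm_v_le h0 h1 i
  · intro x hx y hy hseg
    rw [mem_closedBall_zero_iff] at hx hy
    obtain ⟨c, d, hc, hd, hcd, hz⟩ := hseg
    -- coordinates i and i+1 of v a i are 1
    have key : ∀ j : ℕ, (u a i) j = 1 → (x : Linf) j = 1 ∧ (y : Linf) j = 1 := by
      intro j hj
      have hcoord : c * (x : Linf) j + d * (y : Linf) j = 1 := by
        have := congrArg (fun w : Y a => (w : Linf) j) hz
        simp only at this
        rw [coord_add_smul] at this
        rw [this]
        exact hj
      exact combo_one hc hd hcd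
        (le_of_abs_le (coord_abs_le_of_ball hx j))
        (le_of_abs_le (coord_abs_le_of_ball hy j)) hcoord
    obtain ⟨hx1, hy1⟩ := key i (u_coord_self h0 h1 i)
    obtain ⟨hx2, hy2⟩ := key (i+1) (u_coord_succ h0 h1 i)
    -- x - y has coordinates i, i+1 equal to zero, hence is zero
    have hxy : x = y := by
      obtain ⟨s, t, hst⟩ := exists_rep (x - y).2
      have e1 : (s • a 0 + t • a 1) i = 0 := by
        rw [hst]
        have : ((x - y : Y a) : Linf) = (x : Linf) - (y : Linf) := rfl
        rw [this, lp.coeFn_sub, Pi.sub_apply, hx1, hy1, sub_self]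
      have e2 : (s • a 0 + t • a 1) (i+1) = 0 := by
        rw [hst]
        have : ((x - y : Y a) : Linf) = (x : Linf) - (y : Linf) := rfl
        rw [this, lp.coeFn_sub, Pi.sub_apply, hx2, hy2, sub_self]
      rw [coord_comb h0 h1] at e1 e2
      have hsin : 0 < Real.sin (th i - th (i+1)) := by
        apply Real.sin_pos_of_pos_of_lt_pi
        · linarith [th_lt_th (Nat.lt_succ_self i)]
        · linarith [th_le_pi_div_two i, th_pos (i+1), pi_pos]
      rw [Real.sin_sub] at hsin
      have hs : s = 0 := by
        have h3 : s * (Real.sin (th i) * Real.cos (th (i+1)) - Real.cos (th i) * Real.sin (th (i+1))) = 0 := by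
          linear_combination Real.sin (th i) * e2 - Real.sin (th (i+1)) * e1
        rcases mul_eq_zero.1 h3 with h | h
        · exact h
        · exfalso; rw [h] at hsin; exact lt_irrefl 0 hsin
      have ht : t = 0 := by
        have h3 : t * (Real.sin (th i) * Real.cos (th (i+1)) - Real.cos (th i) * Real.sin (th (i+1))) = 0 := by
          linear_combination Real.cos (th (i+1)) * e1 - Real.cos (th i) * e2
        rcases mul_eq_zero.1 h3 with h | h
        · exact h
        · exfalso; rw [h] at hsin; exact lt_irrefl 0 hsin
      have : ((x - y : Y a) : Linf) = 0 := by
        rw [← hst, hs, ht]; simp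
      have : (x - y : Y a) = 0 := Subtype.ext this
      exact sub_eq_zero.1 this
    subst hxy
    have : v a i = x := by
      rw [← hz, ← add_smul, hcd, one_smul]
    constructor <;> exact this.symm

include h0 h1 in
lemma extreme_infinite :
    (Set.extremePoints ℝ (Metric.closedBall (0 : Y a) 1)).Infinite := by
  apply Set.infinite_of_injective_forall_mem (f := fun i : ℕ => v a i)
  · intro i j hij
    by_contra hne
    rcases Nat.lt_or_ge i j with h | h
    · have e1 : (u a i) i = 1 := u_coord_self h0 h1 i
      have e2 : (u a j) i < 1 := u_coord_lt h0 h1 h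
      have : u a i = u a j := congrArg Subtype.val hij
      rw [this] at e1
      linarith
    · have h' : j < i := lt_of_le_of_ne h (Ne.symm hne)
      have e1 : (u a j) j = 1 := u_coord_self h0 h1 j
      have e2 : (u a i) j < 1 := u_coord_lt h0 h1 h'
      have : u a i = u a j := congrArg Subtype.val hij
      rw [this] at e2
      linarith
  · intro i
    exact v_extreme h0 h1 i

lemma two_by_two {a1 b1 a2 b2 p q p' q' : ℝ}
    (e1 : p * a1 + q * b1 = 1) (e2 : p * a2 + q * b2 = 1)
    (e3 : p' * a1 + q' * b1 = 1) (e4 : p' * a2 + q' * b2 = 1)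
    (hne : ¬(a1 = a2 ∧ b1 = b2)) : p = p' ∧ q = q' := by
  by_cases hdet : a1 * b2 - b1 * a2 = 0
  · exfalso
    apply hne
    constructor
    · linear_combination a2 * e1 - a1 * e2 + q * hdet
    · linear_combination b2 * e1 - b1 * e2 - p * hdet
  · constructor
    · have h : (p - p') * (a1 * b2 - b1 * a2) = 0 := by
        linear_combination b2 * e1 - b1 * e2 - b2 * e3 + b1 * e4
      rcases mul_eq_zero.1 h with h | h
      · linarith
      · exact absurd h hdet
    · have h : (q - q') * (a1 * b2 - b1 * a2) = 0 := by
        linear_combination a1 * e2 - a2 * e1 - a1 * e4 + a2 * e3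
      rcases mul_eq_zero.1 h with h | h
      · linarith
      · exact absurd h hdet

lemma mem_openSegment_sub_add {M : Type*} [AddCommGroup M] [Module ℝ M] (z w : M) :
    z ∈ openSegment ℝ (z - w) (z + w) := by
  refine ⟨1/2, 1/2, by norm_num, by norm_num, by norm_num, ?_⟩
  module

set_option maxHeartbeats 1000000 in
set_option synthInstance.maxHeartbeats 400000 in
include h0 h1 in
lemma no_isometry (n : ℕ) (T : Y a →ₗᵢ[ℝ] (Fin n → ℝ)) : False := by
  classical
  set E := Set.extremePoints ℝ (Metric.closedBall (0 : Y a) 1) with hE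
  have hinf : E.Infinite := extreme_infinite h0 h1
  -- signed coordinate functionals
  set F : Fin n × Bool → (Y a →ₗ[ℝ] ℝ) := fun pr =>
    ((if pr.2 then (1:ℝ) else -1) • ((LinearMap.proj pr.1).comp T.toLinearMap)) with hF
  have hFapp : ∀ pr z, F pr z = (if pr.2 then (1:ℝ) else -1) * (T z pr.1) := by
    intro pr z; rfl
  -- prospective singleton sets
  set S : (Fin n × Bool) × (Fin n × Bool) → Set (Y a) := fun qr =>
    {z | F qr.1 z = 1 ∧ F qr.2 z = 1 ∧ F qr.1 ≠ F qr.2} with hS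
  have hsub : ∀ qr, (S qr).Subsingleton := by
    intro qr z hz z' hz'
    obtain ⟨hz1, hz2, hfne⟩ := hz
    obtain ⟨hz1', hz2', -⟩ := hz'
    have l1 := lin_rep h0 h1 (F qr.1) z
    have l2 := lin_rep h0 h1 (F qr.2) z
    have l3 := lin_rep h0 h1 (F qr.1) z'
    have l4 := lin_rep h0 h1 (F qr.2) z'
    rw [hz1] at l1; rw [hz2] at l2; rw [hz1'] at l3; rw [hz2'] at l4
    have hne : ¬(F qr.1 (A a 0) = F qr.2 (A a 0) ∧ F qr.1 (A a 1) = F qr.2 (A a 1)) := by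
      rintro ⟨hA0, hA1⟩
      apply hfne
      apply LinearMap.ext
      intro w
      rw [lin_rep h0 h1 (F qr.1) w, lin_rep h0 h1 (F qr.2) w, hA0, hA1]
    obtain ⟨hp, hq⟩ := two_by_two l1.symm l2.symm l3.symm l4.symm hne
    rw [← rep h0 h1 z, ← rep h0 h1 z', hp, hq]
  -- every extreme point lies in some S qr
  have hmem : ∀ z ∈ E, ∃ qr, z ∈ S qr := by
    intro z hzE
    rw [hE, mem_extremePoints] at hzE
    obtain ⟨hz_mem, hz_ext⟩ := hzE
    rw [mem_closedBall_zero_iff] at hz_mem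
    -- A a 0 is nonzero
    have hA0ne : A a 0 ≠ 0 := by
      intro h
      have : (1:ℝ) • a 0 + (0:ℝ) • a 1 = 0 := by
        have : a 0 = 0 := congrArg Subtype.val h
        rw [this]; simp
      exact one_ne_zero (indep h0 h1 this).1
    have hA0norm : 0 < ‖A a 0‖ := norm_pos_iff.2 hA0ne
    -- step 1 : ‖z‖ = 1
    have hz1 : ‖z‖ = 1 := by
      rcases eq_or_lt_of_le hz_mem with h | h
      · exact h
      · exfalso
        set w : Y a := ((1 - ‖z‖) / ‖A a 0‖) • A a 0 with hw
        have hwnorm : ‖w‖ = 1 - ‖z‖ := by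
          rw [hw, norm_smul, Real.norm_eq_abs, abs_of_pos (div_pos (by linarith) hA0norm),
            div_mul_cancel₀ _ hA0norm.ne']
        have hx : z - w ∈ Metric.closedBall (0 : Y a) 1 := by
          rw [mem_closedBall_zero_iff]
          calc ‖z - w‖ ≤ ‖z‖ + ‖w‖ := norm_sub_le _ _
          _ = 1 := by rw [hwnorm]; ring
        have hy : z + w ∈ Metric.closedBall (0 : Y a) 1 := by
          rw [mem_closedBall_zero_iff]
          calc ‖z + w‖ ≤ ‖z‖ + ‖w‖ := norm_add_le _ _
          _ = 1 := by rw [hwnorm]; ring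
        have := (hz_ext _ hx _ hy (mem_openSegment_sub_add z w)).1
        have hw0 : w = 0 := sub_eq_self.1 this
        rw [hw0] at hwnorm
        rw [norm_zero] at hwnorm
        linarith
    -- step 2 : some coordinate attains 1
    have hTz : ∀ j, |T z j| ≤ 1 := by
      intro j
      have : ‖T z‖ = 1 := by rw [T.norm_map, hz1]
      rw [← Real.norm_eq_abs]
      calc ‖T z j‖ ≤ ‖T z‖ := norm_le_pi_norm (T z) j
      _ = 1 := this
    have hactive : ∃ j, |T z j| = 1 := by
      by_contra hno
      push_neg at hno
      have : ‖T z‖ < 1 := by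
        rw [pi_norm_lt_iff one_pos]
        intro j
        rw [Real.norm_eq_abs]
        exact lt_of_le_of_ne (hTz j) (hno j)
      rw [T.norm_map, hz1] at this
      exact lt_irrefl 1 this
    obtain ⟨j0, hj0⟩ := hactive
    -- choose the sign
    have hsign : ∃ b : Bool, F (j0, b) z = 1 := by
      rcases abs_eq (by norm_num : (0:ℝ) ≤ 1) |>.1 hj0 with h | h
      · exact ⟨true, by rw [hFapp]; simp [h]⟩
      · exact ⟨false, by rw [hFapp]; simp [h]⟩
    obtain ⟨b0, hb0⟩ := hsign
    set p1 : Fin n × Bool := (j0, b0) with hp1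
    by_cases hall : ∀ pr : Fin n × Bool, F pr z = 1 → F pr = F p1
    · -- all active functionals agree: contradiction with extremality
      exfalso
      set f := F p1 with hf
      set v0 : Y a := (f (A a 1)) • A a 0 - (f (A a 0)) • A a 1 with hv0
      have hfv0 : f v0 = 0 := by
        rw [hv0, map_sub, map_smul, map_smul, smul_eq_mul, smul_eq_mul]; ring
      have hv0ne : v0 ≠ 0 := by
        intro h
        have hco : (f (A a 1)) • a 0 + (-(f (A a 0))) • a 1 = 0 := by
          have h' := congrArg Subtype.val h
          rw [hv0] at h'
          simp only [Submodule.coe_sub, Submodule.coe_smul, ZeroMemClass.coe_zero] at h'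
          have ha0 : ((A a 0 : Y a) : Linf) = a 0 := rfl
          have ha1 : ((A a 1 : Y a) : Linf) = a 1 := rfl
          rw [ha0, ha1] at h'
          rw [← h']
          module
        obtain ⟨hc1, hc2⟩ := indep h0 h1 hco
        have : f z = 0 := by
          rw [lin_rep h0 h1 f z, hc1, neg_eq_zero.1 hc2]; ring
        rw [hb0] at this
        exact one_ne_zero this
      -- active coordinates kill T v0
      have hTv0 : ∀ j, |T z j| = 1 → T v0 j = 0 := by
        intro j hj
        rcases abs_eq (by norm_num : (0:ℝ) ≤ 1) |>.1 hj with h | h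
        · have hact : F (j, true) z = 1 := by rw [hFapp]; simp [h]
          have := hall (j, true) hact
          have happ := congrArg (fun g : Y a →ₗ[ℝ] ℝ => g v0) this
          rw [hFapp, hfv0] at happ
          simpa using happ
        · have hact : F (j, false) z = 1 := by rw [hFapp]; simp [h]
          have := hall (j, false) hact
          have happ := congrArg (fun g : Y a →ₗ[ℝ] ℝ => g v0) this
          rw [hFapp, hfv0] at happ
          simp only [if_neg Bool.false_ne_true] at happ
          linarith [happ]
      -- the perturbation size
      set hfun : Fin n → ℝ := fun j =>
        if |T z j| = 1 then 1 else (1 - |T z j|) / (|T v0 j| + 1) with hhfun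
      have hne' : (Finset.univ : Finset (Fin n)).Nonempty := ⟨j0, Finset.mem_univ _⟩
      set δ : ℝ := Finset.univ.inf' hne' hfun with hδ
      have hδpos : 0 < δ := by
        rw [hδ, Finset.lt_inf'_iff]
        intro j _
        simp only [hhfun]
        by_cases h : |T z j| = 1
        · rw [if_pos h]; norm_num
        · rw [if_neg h]
          have h1' : |T z j| < 1 := lt_of_le_of_ne (hTz j) h
          have h2' : 0 < |T v0 j| + 1 := by positivity
          exact div_pos (by linarith) h2'
      have hδle : ∀ j, δ ≤ hfun j := fun j => Finset.inf'_le _ (Finset.mem_univ j)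
      -- z ± δ v0 are in the ball
      have hball : ∀ ε : ℝ, |ε| = 1 → z + (ε * δ) • v0 ∈ Metric.closedBall (0 : Y a) 1 := by
        intro ε hε
        rw [mem_closedBall_zero_iff, ← T.norm_map]
        apply (pi_norm_le_iff_of_nonneg zero_le_one).2
        intro j
        have happ : T (z + (ε * δ) • v0) j = T z j + (ε * δ) * T v0 j := by
          rw [map_add, map_smul]
          simp
        rw [Real.norm_eq_abs, happ]
        by_cases h : |T z j| = 1
        · rw [hTv0 j h]; rw [mul_zero, add_zero]; exact le_of_eq h
        · have h1' : |T z j| < 1 := lt_of_le_of_ne (hTz j) h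
          have h2' : δ ≤ (1 - |T z j|) / (|T v0 j| + 1) := by
            have h5' := hδle j
            simp only [hhfun] at h5'
            rwa [if_neg h] at h5'
          have h3' : 0 ≤ |T v0 j| := abs_nonneg _
          have h4' : δ * |T v0 j| ≤ 1 - |T z j| := by
            calc δ * |T v0 j| ≤ ((1 - |T z j|) / (|T v0 j| + 1)) * |T v0 j| := by
                  apply mul_le_mul_of_nonneg_right h2' h3'
            _ ≤ 1 - |T z j| := by
                  rw [div_mul_eq_mul_div, div_le_iff₀ (by positivity)]
                  nlinarith
          calc |T z j + (ε * δ) * T v0 j| ≤ |T z j| + |(ε * δ) * T v0 j| := abs_add_le _ _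
          _ = |T z j| + δ * |T v0 j| := by
                rw [abs_mul, abs_mul, hε, abs_of_pos hδpos, one_mul]
          _ ≤ 1 := by linarith
      have hx := hball (-1) (by norm_num)
      have hy := hball 1 (by norm_num)
      rw [show ((-1 : ℝ) * δ) • v0 = -(δ • v0) by module] at hx
      rw [show ((1 : ℝ) * δ) • v0 = δ • v0 by module] at hy
      rw [← sub_eq_add_neg] at hx
      have := (hz_ext _ hx _ hy (mem_openSegment_sub_add z (δ • v0))).1
      have hv00 : δ • v0 = 0 := sub_eq_self.1 this
      rcases smul_eq_zero.1 hv00 with h | h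
      · exact hδpos.ne' h
      · exact hv0ne h
    · push_neg at hall
      obtain ⟨p2, hp2a, hp2b⟩ := hall
      exact ⟨(p1, p2), hb0, hp2a, (Ne.symm hp2b)⟩
  -- conclude finiteness and contradiction
  have hfin : E.Finite := by
    apply Set.Finite.subset (Set.finite_iUnion (fun qr => (hsub qr).finite))
    intro z hz
    obtain ⟨qr, hqr⟩ := hmem z hz
    exact Set.mem_iUnion.2 ⟨qr, hqr⟩
  exact hinf hfin

end WithA

end Stmt9

/-- let `ã₁` and `ã₂` be the elements of `ℓ∞` whose `n`-th entries are
`cos (π / (2n))` and `sin (π / (2n))` respectively, and let `Y = span {ã₁, ã₂}`. Then the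
closed unit ball of `Y` has infinitely many extreme points (so `Y` is not polyhedral), and
for every `n` there is no linear isometry from `Y` into `ℓ∞^n`. -/
theorem stmt9 (a : Fin 2 → Linf)
    (h0 : ∀ i : ℕ, a 0 i = Real.cos (Real.pi / (2 * ((i : ℝ) + 1))))
    (h1 : ∀ i : ℕ, a 1 i = Real.sin (Real.pi / (2 * ((i : ℝ) + 1)))) :
    (Set.extremePoints ℝ
      (Metric.closedBall (0 : Submodule.span ℝ (Set.range a)) 1)).Infinite ∧
    ∀ n : ℕ, IsEmpty ((Submodule.span ℝ (Set.range a)) →ₗᵢ[ℝ] (Fin n → ℝ)) := by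
  constructor
  · exact Stmt9.extreme_infinite h0 h1
  · intro n
    exact ⟨fun T => Stmt9.no_isometry h0 h1 n T⟩
end
end

section
/- Let X be a finite-dimensional polyhedral real Banach space, let Y be a subspace of X, and let v ∈ Y with ‖v‖ = 1. Let f be a linear functional on X with f(x) ≤ 1 for all x in the closed unit ball B_X, let F = {x ∈ B_X : f(x) = 1}, and suppose v lies in the intrinsic (relative) interior of F (so that F is the minimal face of B_X containing v). Then v is an extreme point of the closed unit ball B_Y of Y if and only if F ∩ Y = {v}. -/
noncomputable section

/-- let `X` be a finite-dimensional polyhedral real Banach space, `Y` a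
subspace, and `v ∈ Y` with `‖v‖ = 1`. Let `f` be a linear functional with `f ≤ 1` on the
closed unit ball `B_X`, let `F = B_X ∩ {x : f x = 1}`, and suppose `v` lies in the
intrinsic (relative) interior of `F` (so `F` is the minimal face of `B_X` containing `v`).
Then `v` is an extreme point of the closed unit ball of `Y` iff `F ∩ Y = {v}`. -/
theorem stmt10 {X : Type*} [NormedAddCommGroup X] [NormedSpace ℝ X]
    [FiniteDimensional ℝ X]
    (hpoly : (Set.extremePoints ℝ (Metric.closedBall (0 : X) 1)).Finite)
    (Y : Submodule ℝ X) (v : X) (hv : v ∈ Y) (hvnorm : ‖v‖ = 1)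
    (f : X →ₗ[ℝ] ℝ) (hf : ∀ x ∈ Metric.closedBall (0 : X) 1, f x ≤ 1)
    (F : Set X) (hF : F = Metric.closedBall (0 : X) 1 ∩ {x | f x = 1})
    (hvF : v ∈ intrinsicInterior ℝ F) :
    (⟨v, hv⟩ : Y) ∈ Set.extremePoints ℝ (Metric.closedBall (0 : Y) 1) ↔
      F ∩ (Y : Set X) = {v} := by
  have hvF' : v ∈ F := intrinsicInterior_subset hvF
  have hvB : (⟨v, hv⟩ : Y) ∈ Metric.closedBall (0 : Y) 1 := by
    rw [mem_closedBall_zero_iff]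
    show ‖v‖ ≤ 1
    rw [hvnorm]
  constructor
  · rintro ⟨-, hext⟩
    ext w
    simp only [Set.mem_inter_iff, Set.mem_singleton_iff, SetLike.mem_coe]
    constructor
    · rintro ⟨hwF, hwY⟩
      by_contra hwv
      -- extend the segment from w through v a bit beyond v inside F
      obtain ⟨p, hp, hpv⟩ := mem_intrinsicInterior.1 hvF
      have hwA : w ∈ affineSpan ℝ F := subset_affineSpan ℝ F hwF
      have hvA : v ∈ affineSpan ℝ F := subset_affineSpan ℝ F hvF'
      have hmem : ∀ t : ℝ, AffineMap.lineMap w v t ∈ affineSpan ℝ F :=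
        fun t => AffineMap.lineMap_mem t hwA hvA
      set c : ℝ → affineSpan ℝ F := fun t => ⟨AffineMap.lineMap w v t, hmem t⟩ with hc
      have hcont : Continuous c := by
        apply Continuous.subtype_mk
        exact AffineMap.lineMap_continuous
      have hc1 : c 1 = p := by
        apply Subtype.ext
        simp [hc, hpv]
      have : ∀ᶠ t in nhds (1 : ℝ), c t ∈ interior ((↑) ⁻¹' F : Set (affineSpan ℝ F)) := by
        have := hcont.continuousAt (x := (1:ℝ))
        exact this.eventually_mem (isOpen_interior.mem_nhds (hc1 ▸ hp))
      obtain ⟨ε, hε, hεmem⟩ : ∃ ε : ℝ, 0 < ε ∧ c (1 + ε) ∈ interior ((↑) ⁻¹' F : Set (affineSpan ℝ F)) := by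
        obtain ⟨δ, hδ, hδ'⟩ := Metric.eventually_nhds_iff.1 this
        refine ⟨δ/2, half_pos hδ, hδ' ?_⟩
        rw [Real.dist_eq, show (1 + δ/2 - 1 : ℝ) = δ/2 by ring,
          abs_of_pos (half_pos hδ)]
        linarith
      set z : X := AffineMap.lineMap w v (1 + ε) with hz
      have hzF : z ∈ F := by
        have h := interior_subset hεmem
        exact h
      have hzY : z ∈ Y := by
        have : z = (1 + ε) • v - ε • w := by
          simp [hz, AffineMap.lineMap_apply]
          module
        rw [this]
        exact Y.sub_mem (Y.smul_mem _ hv) (Y.smul_mem _ hwY)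
      have hzB : (⟨z, hzY⟩ : Y) ∈ Metric.closedBall (0 : Y) 1 := by
        rw [mem_closedBall_zero_iff]
        show ‖z‖ ≤ 1
        rw [hF] at hzF
        exact mem_closedBall_zero_iff.1 hzF.1
      have hwB : (⟨w, hwY⟩ : Y) ∈ Metric.closedBall (0 : Y) 1 := by
        rw [mem_closedBall_zero_iff]
        show ‖w‖ ≤ 1
        rw [hF] at hwF
        exact mem_closedBall_zero_iff.1 hwF.1
      have hseg : (⟨v, hv⟩ : Y) ∈ openSegment ℝ (⟨z, hzY⟩ : Y) (⟨w, hwY⟩ : Y) := by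
        have h1ε : (1:ℝ) + ε ≠ 0 := by positivity
        refine ⟨1/(1+ε), ε/(1+ε), by positivity, by positivity, by field_simp, ?_⟩
        apply Subtype.ext
        show (1/(1+ε)) • z + (ε/(1+ε)) • w = v
        rw [hz]
        simp only [AffineMap.lineMap_apply_module]
        match_scalars <;> field_simp <;> ring
      have := hext hwB hzB (by rw [openSegment_symm]; exact hseg)
      exact hwv (by simpa using congrArg Subtype.val this)
    · rintro rfl
      exact ⟨hvF', hv⟩
  · intro hFY
    refine ⟨hvB, ?_⟩
    rintro x hx y hy ⟨a, b, ha, hb, hab, habv⟩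
    have hfv : f v = 1 := by rw [hF] at hvF'; exact hvF'.2
    have hxB : (x : X) ∈ Metric.closedBall (0 : X) 1 := by
      rw [mem_closedBall_zero_iff]
      exact mem_closedBall_zero_iff.1 hx
    have hyB : (y : X) ∈ Metric.closedBall (0 : X) 1 := by
      rw [mem_closedBall_zero_iff]
      exact mem_closedBall_zero_iff.1 hy
    have hfx : f x ≤ 1 := hf _ hxB
    have hfy : f y ≤ 1 := hf _ hyB
    have hsum : a * f x + b * f y = 1 := by
      have : f ((a • x + b • y : Y) : X) = f v := by rw [habv]
      simpa [map_add, map_smul] using this.trans hfv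
    have hfx1 : f x = 1 := by nlinarith
    have hfy1 : f y = 1 := by nlinarith
    have hxv : (x : X) = v := by
      have : (x : X) ∈ F ∩ (Y : Set X) := ⟨by rw [hF]; exact ⟨hxB, hfx1⟩, x.2⟩
      rwa [hFY] at this
    have hyv : (y : X) = v := by
      have : (y : X) ∈ F ∩ (Y : Set X) := ⟨by rw [hF]; exact ⟨hyB, hfy1⟩, y.2⟩
      rwa [hFY] at this
    exact Subtype.ext hxv
end
end

section
/- Let 𝒜 = {ã₁,…,ã_m} be a set of linearly independent elements of ℓ∞^n, let W = span 𝒜, and let β = (β₁,…,β_m) ∈ ℝ^m. Then ∑_{k=1}^m β_k ã_k is an extreme point of the closed unit ball of W if and only if β is a maximal *-constant of 𝒜 (i.e., β is a *-constant of some *-set S ⊆ {1,…,n} and is maximal). -/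
noncomputable section

/-- `β` is a `*`-constant of the set `S ⊆ {1, …, n}` for the family
`𝒜 = {ã₁, …, ã_m} ⊆ ℓ∞^n`: `|∑ β_k a_s^k| = 1` for all `s ∈ S` and
`|∑ β_k a_j^k| < 1` for all `j ∉ S`. -/
def IsStarConstant {m n : ℕ} (a : Fin m → (Fin n → ℝ)) (S : Set (Fin n))
    (β : Fin m → ℝ) : Prop :=
  (∀ s ∈ S, |∑ k, β k * a k s| = 1) ∧ (∀ j ∉ S, |∑ k, β k * a k j| < 1)

/-- `β` is a maximal `*`-constant: it is a `*`-constant of some `*`-set `S`, and there is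
no strictly larger `*`-set `S₁` with a `*`-constant `α` agreeing with `β` on `S` (i.e.
`∑ α_k a_s^k = ∑ β_k a_s^k` for all `s ∈ S`). -/
def IsMaximalStarConstant {m n : ℕ} (a : Fin m → (Fin n → ℝ)) (β : Fin m → ℝ) : Prop :=
  ∃ S : Set (Fin n), IsStarConstant a S β ∧
    ¬∃ (S₁ : Set (Fin n)) (α : Fin m → ℝ), S ⊂ S₁ ∧ IsStarConstant a S₁ α ∧
      ∀ s ∈ S, ∑ k, α k * a k s = ∑ k, β k * a k s


lemma extreme_ball_iff {E : Type*} [NormedAddCommGroup E] [NormedSpace ℝ E] (x : E) :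
    x ∈ Set.extremePoints ℝ (Metric.closedBall (0 : E) 1) ↔
      ‖x‖ ≤ 1 ∧ ∀ y : E, ‖x + y‖ ≤ 1 → ‖x - y‖ ≤ 1 → y = 0 := by
  constructor
  · rintro ⟨hx, h⟩
    refine ⟨by simpa using hx, fun y h1 h2 => ?_⟩
    have hseg : x ∈ openSegment ℝ (x + y) (x - y) := by
      refine ⟨1/2, 1/2, by norm_num, by norm_num, by norm_num, by module⟩
    have := (@h (x + y) (by simpa using h1) (x - y) (by simpa using h2) hseg)
    linear_combination (norm := abel) this - x
  · rintro ⟨hx, h⟩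
    refine ⟨by simpa using hx, ?_⟩
    rintro x₁ hx₁ x₂ hx₂ ⟨t, u, ht, hu, htu, hc⟩
    rw [Metric.mem_closedBall, dist_zero_right] at hx₁ hx₂
    set s := min t u with hs
    have hs0 : 0 < s := lt_min ht hu
    have hst : s ≤ t := min_le_left _ _
    have hsu : s ≤ u := min_le_right _ _
    have e1 : x + s • (x₂ - x₁) = (t - s) • x₁ + (u + s) • x₂ := by
      rw [← hc]; module
    have e2 : x - s • (x₂ - x₁) = (t + s) • x₁ + (u - s) • x₂ := by
      rw [← hc]; module
    have n1 : ‖x + s • (x₂ - x₁)‖ ≤ 1 := by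
      rw [e1]
      calc ‖(t - s) • x₁ + (u + s) • x₂‖ ≤ ‖(t - s) • x₁‖ + ‖(u + s) • x₂‖ := norm_add_le _ _
        _ = |t - s| * ‖x₁‖ + |u + s| * ‖x₂‖ := by rw [norm_smul, norm_smul]; simp [Real.norm_eq_abs]
        _ = (t - s) * ‖x₁‖ + (u + s) * ‖x₂‖ := by
            rw [abs_of_nonneg (by linarith), abs_of_nonneg (by linarith)]
        _ ≤ (t - s) * 1 + (u + s) * 1 := by
            gcongr <;> linarith
        _ = 1 := by linarith
    have n2 : ‖x - s • (x₂ - x₁)‖ ≤ 1 := by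
      rw [e2]
      calc ‖(t + s) • x₁ + (u - s) • x₂‖ ≤ ‖(t + s) • x₁‖ + ‖(u - s) • x₂‖ := norm_add_le _ _
        _ = |t + s| * ‖x₁‖ + |u - s| * ‖x₂‖ := by rw [norm_smul, norm_smul]; simp [Real.norm_eq_abs]
        _ = (t + s) * ‖x₁‖ + (u - s) * ‖x₂‖ := by
            rw [abs_of_nonneg (by linarith), abs_of_nonneg (by linarith)]
        _ ≤ (t + s) * 1 + (u - s) * 1 := by
            gcongr <;> linarith
        _ = 1 := by linarith
    have h0 := h (s • (x₂ - x₁)) n1 n2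
    have hx12 : x₂ = x₁ := by
      have := (smul_eq_zero.mp h0).resolve_left (by positivity)
      rwa [sub_eq_zero] at this
    subst hx12
    rw [← hc, ← add_smul, htu, one_smul]


lemma extreme_ball_subtype_iff {E : Type*} [NormedAddCommGroup E] [NormedSpace ℝ E]
    (W : Submodule ℝ E) (x : E) (hx : x ∈ W) :
    (⟨x, hx⟩ : W) ∈ Set.extremePoints ℝ (Metric.closedBall (0 : W) 1) ↔
      ‖x‖ ≤ 1 ∧ ∀ y ∈ W, ‖x + y‖ ≤ 1 → ‖x - y‖ ≤ 1 → y = 0 := by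
  rw [extreme_ball_iff]
  refine and_congr Iff.rfl ?_
  constructor
  · intro h y hy h1 h2
    have := h ⟨y, hy⟩ h1 h2
    simpa [Subtype.ext_iff] using this
  · intro h y h1 h2
    have := h y.1 y.2 h1 h2
    exact Subtype.ext this


lemma pi_norm_le_one_iff {n : ℕ} (z : Fin n → ℝ) : ‖z‖ ≤ 1 ↔ ∀ j, |z j| ≤ 1 := by
  rw [pi_norm_le_iff_of_nonneg zero_le_one]
  simp [Real.norm_eq_abs]

lemma coord_iff {n : ℕ} (W : Submodule ℝ (Fin n → ℝ)) (x : Fin n → ℝ) :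
    (‖x‖ ≤ 1 ∧ ∀ y ∈ W, ‖x + y‖ ≤ 1 → ‖x - y‖ ≤ 1 → y = 0) ↔
    ((∀ j, |x j| ≤ 1) ∧ ∀ y ∈ W, (∀ s, |x s| = 1 → y s = 0) → y = 0) := by
  constructor
  · rintro ⟨h1, h2⟩
    have hb : ∀ j, |x j| ≤ 1 := (pi_norm_le_one_iff x).mp h1
    refine ⟨hb, fun y hy hy0 => ?_⟩
    by_cases hT : (Finset.univ.filter (fun j : Fin n => |x j| ≠ 1)).Nonempty
    · set T := Finset.univ.filter (fun j : Fin n => |x j| ≠ 1) with hTdef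
      set ε := T.inf' hT (fun j => (1 - |x j|) / (|y j| + 1)) with hε
      have hεpos : 0 < ε := by
        rw [hε]
        rw [Finset.lt_inf'_iff]
        intro j hj
        have hj1 : |x j| ≠ 1 := by simpa [hTdef] using hj
        have : |x j| < 1 := lt_of_le_of_ne (hb j) hj1
        apply div_pos <;> linarith [abs_nonneg (y j)]
      have key : ∀ j, |x j| + ε * |y j| ≤ 1 := by
        intro j
        by_cases hj : |x j| = 1
        · rw [hy0 j hj]; simp [hj]
        · have hjT : j ∈ T := by simp [hTdef, hj]
          have hle : ε ≤ (1 - |x j|) / (|y j| + 1) := Finset.inf'_le _ hjT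
          have hd : (0:ℝ) < |y j| + 1 := by positivity
          have h' : ε * (|y j| + 1) ≤ 1 - |x j| := by
            rw [le_div_iff₀ hd] at hle; exact hle
          nlinarith [abs_nonneg (y j), hεpos]
      have hn1 : ‖x + ε • y‖ ≤ 1 := by
        rw [pi_norm_le_one_iff]
        intro j
        calc |(x + ε • y) j| = |x j + ε * y j| := by simp
          _ ≤ |x j| + |ε * y j| := abs_add_le _ _
          _ = |x j| + ε * |y j| := by rw [abs_mul, abs_of_pos hεpos]
          _ ≤ 1 := key j
      have hn2 : ‖x - ε • y‖ ≤ 1 := by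
        rw [pi_norm_le_one_iff]
        intro j
        calc |(x - ε • y) j| = |x j - ε * y j| := by simp
          _ ≤ |x j| + |ε * y j| := abs_sub _ _
          _ = |x j| + ε * |y j| := by rw [abs_mul, abs_of_pos hεpos]
          _ ≤ 1 := key j
      have := h2 (ε • y) (W.smul_mem _ hy) hn1 hn2
      rcases smul_eq_zero.mp this with h | h
      · exact absurd h (ne_of_gt hεpos)
      · exact h
    · -- everything has |x j| = 1, so y = 0 directly
      funext j
      have : |x j| = 1 := by
        by_contra hj
        exact hT ⟨j, by simp [hj]⟩
      exact hy0 j this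
  · rintro ⟨h1, h2⟩
    refine ⟨(pi_norm_le_one_iff x).mpr h1, fun y hy hn1 hn2 => ?_⟩
    rw [pi_norm_le_one_iff] at hn1 hn2
    refine h2 y hy fun s hs => ?_
    have e1 : |x s + y s| ≤ 1 := by simpa using hn1 s
    have e2 : |x s - y s| ≤ 1 := by simpa using hn2 s
    have q1 : (x s + y s) ^ 2 ≤ 1 := by nlinarith [abs_le.mp e1]
    have q2 : (x s - y s) ^ 2 ≤ 1 := by nlinarith [abs_le.mp e2]
    have q3 : x s ^ 2 = 1 := by
      have := sq_abs (x s); rw [hs] at this; linarith [this]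
    nlinarith [sq_nonneg (y s)]


lemma step_lemma {c w : ℝ} (hc : |c| < 1) (hw : w ≠ 0) :
    0 < (1 - c * Real.sign w) / |w| ∧
    (∀ t, 0 ≤ t → t ≤ (1 - c * Real.sign w) / |w| → |c + t * w| ≤ 1) ∧
    |c + ((1 - c * Real.sign w) / |w|) * w| = 1 := by
  have habs := abs_lt.mp hc
  rcases hw.lt_or_gt with h | h
  · rw [Real.sign_of_neg h, abs_of_neg h]
    have hwpos : 0 < -w := neg_pos.mpr h
    have hgval : (1 - c * (-1)) / (-w) = (1 + c) / (-w) := by ring_nf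
    refine ⟨by rw [hgval]; exact div_pos (by linarith) hwpos, ?_, ?_⟩
    · intro t ht0 ht
      rw [hgval] at ht
      have h1 : t * (-w) ≤ 1 + c := by rwa [le_div_iff₀ hwpos] at ht
      rw [abs_le]
      constructor
      · nlinarith
      · nlinarith
    · rw [hgval]
      have : (1 + c) / (-w) * w = -(1 + c) := by field_simp
      rw [this]
      rw [show c + -(1 + c) = -1 by ring, abs_neg, abs_one]
  · rw [Real.sign_of_pos h, abs_of_pos h]
    have hgval : (1 - c * 1) / w = (1 - c) / w := by ring_nf
    refine ⟨by rw [hgval]; exact div_pos (by linarith) h, ?_, ?_⟩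
    · intro t ht0 ht
      rw [hgval] at ht
      have h1 : t * w ≤ 1 - c := by rwa [le_div_iff₀ h] at ht
      rw [abs_le]
      constructor
      · nlinarith
      · nlinarith
    · rw [hgval]
      have : (1 - c) / w * w = 1 - c := by field_simp
      rw [this]
      simp


lemma star_iff {m n : ℕ} (a : Fin m → (Fin n → ℝ)) (β : Fin m → ℝ) :
    ((∀ j, |∑ k, β k * a k j| ≤ 1) ∧
      ∀ y ∈ Submodule.span ℝ (Set.range a),
        (∀ s, |∑ k, β k * a k s| = 1 → y s = 0) → y = 0) ↔
    IsMaximalStarConstant a β := by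
  constructor
  · rintro ⟨h1, h2⟩
    refine ⟨{s | |∑ k, β k * a k s| = 1}, ⟨fun s hs => hs, fun j hj => lt_of_le_of_ne (h1 j) hj⟩, ?_⟩
    rintro ⟨S₁, α, hss, ⟨hα1, _⟩, hagree⟩
    set y : Fin n → ℝ := fun j => (∑ k, α k * a k j) - (∑ k, β k * a k j) with hydef
    have hyW : y ∈ Submodule.span ℝ (Set.range a) := by
      rw [Submodule.mem_span_range_iff_exists_fun ℝ]
      refine ⟨fun k => α k - β k, ?_⟩
      funext j
      simp [hydef, Finset.sum_apply, sub_mul, Finset.sum_sub_distrib]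
    have hy0 : ∀ s, |∑ k, β k * a k s| = 1 → y s = 0 := by
      intro s hs
      have := hagree s hs
      simp [hydef, this]
    have hyz := h2 y hyW hy0
    obtain ⟨s₁, hs₁S₁, hs₁S⟩ := Set.exists_of_ssubset hss
    have hy1 : y s₁ = 0 := by rw [hyz]; rfl
    have heq : ∑ k, α k * a k s₁ = ∑ k, β k * a k s₁ := by
      have : (∑ k, α k * a k s₁) - (∑ k, β k * a k s₁) = 0 := hy1
      linarith
    exact hs₁S (show |∑ k, β k * a k s₁| = 1 by rw [← heq]; exact hα1 s₁ hs₁S₁)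
  · rintro ⟨S', ⟨hc1, hc2⟩, hmax⟩
    have hmem : ∀ s, s ∈ S' ↔ |∑ k, β k * a k s| = 1 := by
      intro s
      refine ⟨hc1 s, fun hs => ?_⟩
      by_contra hsn
      exact absurd hs (ne_of_lt (hc2 s hsn))
    have h1 : ∀ j, |∑ k, β k * a k j| ≤ 1 := by
      intro j
      by_cases hj : j ∈ S'
      · exact le_of_eq (hc1 j hj)
      · exact le_of_lt (hc2 j hj)
    refine ⟨h1, fun y hyW hy0 => ?_⟩
    by_contra hy
    obtain ⟨γ, hγ⟩ := (Submodule.mem_span_range_iff_exists_fun ℝ).mp hyW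
    have hyj : ∀ j, ∑ k, γ k * a k j = y j := by
      intro j
      rw [← hγ]
      simp [Finset.sum_apply]
    set T := Finset.univ.filter (fun j : Fin n => y j ≠ 0) with hTdef
    have hT : T.Nonempty := by
      by_contra hTe
      apply hy
      funext j
      simp only [Pi.zero_apply]
      by_contra hj
      exact hTe ⟨j, by simp [hTdef, hj]⟩
    have hTx : ∀ j ∈ T, |∑ k, β k * a k j| < 1 ∧ y j ≠ 0 := by
      intro j hj
      have hyj0 : y j ≠ 0 := by simpa [hTdef] using hj
      refine ⟨?_, hyj0⟩
      rcases lt_or_eq_of_le (h1 j) with h | h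
      · exact h
      · exact absurd (hy0 j h) hyj0
    set g : Fin n → ℝ := fun j => (1 - (∑ k, β k * a k j) * Real.sign (y j)) / |y j| with hgdef
    set t₀ := T.inf' hT g with ht₀def
    have ht₀pos : 0 < t₀ := by
      rw [ht₀def, Finset.lt_inf'_iff]
      intro j hj
      exact (step_lemma (hTx j hj).1 (hTx j hj).2).1
    obtain ⟨j₀, hj₀T, hj₀⟩ := Finset.exists_mem_eq_inf' hT g
    set α : Fin m → ℝ := fun k => β k + t₀ * γ k with hαdef
    have hαsum : ∀ j, ∑ k, α k * a k j = (∑ k, β k * a k j) + t₀ * y j := by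
      intro j
      rw [← hyj j]
      simp [hαdef, add_mul, Finset.sum_add_distrib, Finset.mul_sum, mul_assoc]
    set S₁ : Set (Fin n) := {j | |(∑ k, β k * a k j) + t₀ * y j| = 1} with hS₁def
    have hsub : S' ⊆ S₁ := by
      intro s hs
      have hxs := hc1 s hs
      have hys : y s = 0 := hy0 s hxs
      show |(∑ k, β k * a k s) + t₀ * y s| = 1
      rw [hys]; simpa using hxs
    have hj₀S₁ : j₀ ∈ S₁ := by
      show |(∑ k, β k * a k j₀) + t₀ * y j₀| = 1
      rw [ht₀def, hj₀]
      exact (step_lemma (hTx j₀ hj₀T).1 (hTx j₀ hj₀T).2).2.2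
    have hj₀S' : j₀ ∉ S' := by
      intro hcon
      exact (hTx j₀ hj₀T).2 (hy0 j₀ (hc1 j₀ hcon))
    apply hmax
    refine ⟨S₁, α, ⟨hsub, fun hcon => hj₀S' (hcon hj₀S₁)⟩, ⟨?_, ?_⟩, ?_⟩
    · intro s hs
      rw [hαsum]
      exact hs
    · intro j hj
      rw [hαsum]
      by_cases hyj0 : y j = 0
      · have : j ∉ S' := fun hcon => hj (hsub hcon)
        have hlt := hc2 j this
        rw [hyj0]; simpa using hlt
      · have hjT : j ∈ T := by simp [hTdef, hyj0]
        have hle := (step_lemma (hTx j hjT).1 hyj0).2.1 t₀ ht₀pos.le (Finset.inf'_le _ hjT)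
        exact lt_of_le_of_ne hle hj
    · intro s hs
      rw [hαsum, hy0 s (hc1 s hs)]
      ring

/-- for linearly independent `𝒜 = {ã₁, …, ã_m} ⊆ ℓ∞^n` and `W = span 𝒜`,
the element `∑ β_k ã_k` is an extreme point of the closed unit ball of `W` if and only if
`β` is a maximal `*`-constant of `𝒜`. -/
theorem stmt11 (m n : ℕ) (a : Fin m → (Fin n → ℝ)) (ha : LinearIndependent ℝ a)
    (β : Fin m → ℝ) :
    (⟨∑ k, β k • a k, Submodule.sum_mem _ fun k _ =>
        Submodule.smul_mem _ _ (Submodule.subset_span ⟨k, rfl⟩)⟩ :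
      Submodule.span ℝ (Set.range a)) ∈
      Set.extremePoints ℝ
        (Metric.closedBall (0 : Submodule.span ℝ (Set.range a)) 1) ↔
    IsMaximalStarConstant a β := by
  rw [extreme_ball_subtype_iff, coord_iff, ← star_iff a β]
  have hxj : ∀ j, (∑ k, β k • a k) j = ∑ k, β k * a k j := fun j => by
    simp [Finset.sum_apply]
  simp only [hxj]
end
end

section
/- Let r ≥ 2 and let X be the real normed space ℝ² equipped with a norm whose closed unit ball has set of extreme points exactly {±(cos(kπ/r), sin(kπ/r)) : k = 0, 1, …, r−1} (so the unit sphere of X is a regular 2r-sided polygon). Then the number of extreme points of the closed unit ball of L(X, ℓ∞^n), the space of linear operators from X to ℓ∞^n with the operator norm, equals (2r)^n. -/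
noncomputable section

open Real Set

namespace Stmt15
noncomputable section

lemma abs_cos_add_int_mul_pi (x : ℝ) (q : ℤ) : |Real.cos (x + q * π)| = |Real.cos x| := by
  have hs : Real.sin (q * π) = 0 := Real.sin_int_mul_pi q
  have hc : |Real.cos (q * π)| = 1 := by
    have h2 : Real.cos (q * π) ^ 2 = 1 := by
      have := Real.sin_sq_add_cos_sq (q * π)
      rw [hs] at this; nlinarith
    have := Real.sqrt_sq_eq_abs (Real.cos (q * π))
    rw [h2, Real.sqrt_one] at this; exact this.symm
  rw [Real.cos_add, hs, mul_zero, sub_zero, abs_mul, hc, mul_one]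

/-- key bound: for odd integers `m`, `|cos (m * π / (2r))| ≤ cos (π / (2r))`. -/
lemma abs_cos_odd_le (r : ℕ) (hr : 2 ≤ r) (m : ℤ) (hm : Odd m) :
    |Real.cos (m * π / (2 * r))| ≤ Real.cos (π / (2 * r)) := by
  have hrR : (0:ℝ) < (r:ℝ) := by positivity
  have h2r : (0:ℤ) < 2 * r := by positivity
  set s : ℤ := m % (2 * r) with hsdef
  have hs0 : 0 ≤ s := Int.emod_nonneg m (by positivity)
  have hs2r : s < 2 * r := Int.emod_lt_of_pos m h2r
  have hqm : m = 2 * r * (m / (2 * r)) + s := (Int.mul_ediv_add_emod m (2*r)).symm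
  set q : ℤ := m / (2 * r) with hqdef
  have hseq : s = m - 2 * r * q := by linarith
  have hsodd : Odd s := by
    rw [hseq]; exact hm.sub_even ⟨r * q, by ring⟩
  have main : ∀ s' : ℤ, 1 ≤ s' → s' ≤ r →
      |Real.cos (s' * π / (2 * r))| ≤ Real.cos (π / (2 * r)) := by
    intro s' h1 h2
    have h1R : (1:ℝ) ≤ (s':ℝ) := by exact_mod_cast h1
    have hsr : (s':ℝ) ≤ (r:ℝ) := by exact_mod_cast h2
    have hpi := Real.pi_pos
    have harg2 : (s':ℝ) * π / (2 * r) ≤ π / 2 := by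
      rw [div_le_div_iff₀ (by positivity) (by norm_num)]
      nlinarith
    have hx0 : (0:ℝ) ≤ (s':ℝ) * π / (2 * r) := by positivity
    have hnon : 0 ≤ Real.cos ((s':ℝ) * π / (2 * r)) :=
      Real.cos_nonneg_of_mem_Icc ⟨by linarith, harg2⟩
    rw [abs_of_nonneg hnon]
    apply Real.cos_le_cos_of_nonneg_of_le_pi
    · positivity
    · linarith
    · rw [div_le_div_iff₀ (by positivity) (by positivity)]
      nlinarith [mul_nonneg (mul_nonneg (sub_nonneg.mpr h1R) Real.pi_pos.le)
        (by positivity : (0:ℝ) ≤ 2 * (r:ℝ))]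
  rcases le_or_gt s r with hcase | hcase
  · have h1 : 1 ≤ s := by
      rcases hsodd with ⟨k, hk⟩; omega
    have heq : (m:ℝ) * π / (2 * r) = (s:ℝ) * π / (2 * r) + (q:ℝ) * π := by
      rw [hqm]; push_cast; field_simp; ring
    rw [heq, abs_cos_add_int_mul_pi]
    exact main s h1 hcase
  · set s' : ℤ := 2 * r - s with hs'def
    have h1 : 1 ≤ s' := by omega
    have h2 : s' ≤ r := by
      rcases hsodd with ⟨k, hk⟩; omega
    have hm2 : m = 2 * r * (q + 1) - s' := by rw [hs'def]; linarith
    have heq : (m:ℝ) * π / (2 * r) = -((s':ℝ) * π / (2 * r)) + ((q+1 : ℤ):ℝ) * π := by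
      rw [hm2]; push_cast; field_simp; ring
    rw [heq, abs_cos_add_int_mul_pi, Real.cos_neg]
    exact main s' h1 h2


/-- the `j`-th linear functional -/
def Lr (r j : ℕ) (p : Fin 2 → ℝ) : ℝ :=
  Real.cos (j * π / r) * p 0 + Real.sin (j * π / r) * p 1

/-- the dual polygon -/
def K (r : ℕ) : Set (Fin 2 → ℝ) := {p | ∀ j : ℕ, Lr r j p ≤ 1}

/-- the vertices of the dual polygon -/
def w (r i : ℕ) : Fin 2 → ℝ :=
  ![Real.cos ((2*i+1) * π / (2*r)) / Real.cos (π / (2*r)),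
    Real.sin ((2*i+1) * π / (2*r)) / Real.cos (π / (2*r))]

lemma cos_pos_aux (r : ℕ) (hr : 2 ≤ r) : 0 < Real.cos (π / (2*r)) := by
  have hrR : (0:ℝ) < r := by positivity
  have hpi := Real.pi_pos
  apply Real.cos_pos_of_mem_Ioo
  constructor
  · have : (0:ℝ) < π / (2*r) := by positivity
    linarith
  · have h2 : (2:ℝ) ≤ r := by exact_mod_cast hr
    rw [div_lt_div_iff₀ (by positivity) (by norm_num)]
    nlinarith [mul_le_mul_of_nonneg_left h2 hpi.le]

lemma Lr_add_r (r : ℕ) (hr : 1 ≤ r) (j : ℕ) (p : Fin 2 → ℝ) :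
    Lr r (j + r) p = - Lr r j p := by
  have hrR : (0:ℝ) < r := by positivity
  have harg : ((j + r : ℕ):ℝ) * π / r = (j:ℝ) * π / r + π := by
    push_cast; field_simp
  unfold Lr
  rw [harg, Real.cos_add_pi, Real.sin_add_pi]; ring

lemma Lr_add_two_r (r : ℕ) (hr : 1 ≤ r) (j : ℕ) (p : Fin 2 → ℝ) :
    Lr r (j + 2 * r) p = Lr r j p := by
  have : j + 2 * r = j + r + r := by ring
  rw [this, Lr_add_r r hr, Lr_add_r r hr]; ring

lemma mem_K_of (r : ℕ) (hr : 1 ≤ r) (p : Fin 2 → ℝ)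
    (h : ∀ j < 2 * r, Lr r j p ≤ 1) : p ∈ K r := by
  intro j
  induction j using Nat.strong_induction_on with
  | _ j ih =>
    rcases lt_or_ge j (2 * r) with hj | hj
    · exact h j hj
    · have hje : j - 2 * r + 2 * r = j := by omega
      rw [← hje, Lr_add_two_r r hr]
      exact ih _ (by omega)

lemma abs_Lr_le {r : ℕ} (hr : 1 ≤ r) {p : Fin 2 → ℝ} (hp : p ∈ K r) (j : ℕ) :
    |Lr r j p| ≤ 1 := by
  refine abs_le.2 ⟨?_, hp j⟩
  have := hp (j + r)
  rw [Lr_add_r r hr] at this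
  linarith

lemma mem_K_iff (r : ℕ) (hr : 1 ≤ r) (p : Fin 2 → ℝ) :
    p ∈ K r ↔ ∀ k : Fin r, |Lr r k p| ≤ 1 := by
  constructor
  · intro hp k; exact abs_Lr_le hr hp k
  · intro h
    apply mem_K_of r hr
    intro j hj
    rcases lt_or_ge j r with hjr | hjr
    · exact (abs_le.1 (h ⟨j, hjr⟩)).2
    · have hje : j - r + r = j := by omega
      rw [← hje, Lr_add_r r hr]
      have := (abs_le.1 (h ⟨j - r, by omega⟩)).1
      simp only at this ⊢
      linarith

lemma Lr_w (r : ℕ) (hr : 2 ≤ r) (j i : ℕ) :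
    Lr r j (w r i) =
      Real.cos (((2*(j:ℤ) - 2*(i:ℤ) - 1 : ℤ):ℝ) * π / (2*r)) / Real.cos (π/(2*r)) := by
  have hrR : (0:ℝ) < r := by positivity
  unfold Lr w
  simp only [Matrix.cons_val_zero, Matrix.cons_val_one, Matrix.head_cons]
  have key : Real.cos ((j:ℝ)*π/r) * Real.cos ((2*(i:ℝ)+1)*π/(2*r)) +
      Real.sin ((j:ℝ)*π/r) * Real.sin ((2*(i:ℝ)+1)*π/(2*r)) =
      Real.cos (((2*(j:ℤ) - 2*(i:ℤ) - 1 : ℤ):ℝ) * π / (2*r)) := by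
    rw [← Real.cos_sub]
    congr 1
    push_cast
    field_simp
    ring
  rw [← key]
  ring

lemma w_mem_K (r : ℕ) (hr : 2 ≤ r) (i : ℕ) : w r i ∈ K r := by
  intro j
  rw [Lr_w r hr j i]
  have hc := cos_pos_aux r hr
  rw [div_le_one hc]
  calc Real.cos (((2*(j:ℤ) - 2*(i:ℤ) - 1 : ℤ):ℝ) * π / (2*r))
      ≤ |Real.cos (((2*(j:ℤ) - 2*(i:ℤ) - 1 : ℤ):ℝ) * π / (2*r))| := le_abs_self _
    _ ≤ Real.cos (π/(2*r)) := abs_cos_odd_le r hr _ ⟨(j:ℤ) - (i:ℤ) - 1, by ring⟩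

lemma Lr_w_self (r : ℕ) (hr : 2 ≤ r) (i : ℕ) : Lr r i (w r i) = 1 := by
  rw [Lr_w r hr i i]
  have : ((2*(i:ℤ) - 2*(i:ℤ) - 1 : ℤ):ℝ) = -1 := by push_cast; ring
  rw [this]
  have : (-1 : ℝ) * π / (2*r) = -(π / (2*r)) := by ring
  rw [this, Real.cos_neg, div_self (cos_pos_aux r hr).ne']

lemma Lr_w_succ (r : ℕ) (hr : 2 ≤ r) (i : ℕ) : Lr r (i+1) (w r i) = 1 := by
  rw [Lr_w r hr (i+1) i]
  have : ((2*((i+1:ℕ):ℤ) - 2*(i:ℤ) - 1 : ℤ):ℝ) = 1 := by push_cast; ring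
  rw [this, one_mul, div_self (cos_pos_aux r hr).ne']

/-- two independent equations determine the point -/
lemma unique_sol {a b : ℝ} (h : Real.sin (b - a) ≠ 0) {p q : Fin 2 → ℝ}
    (h1 : Real.cos a * p 0 + Real.sin a * p 1 = Real.cos a * q 0 + Real.sin a * q 1)
    (h2 : Real.cos b * p 0 + Real.sin b * p 1 = Real.cos b * q 0 + Real.sin b * q 1) :
    p = q := by
  have hsub := Real.sin_sub b a
  have e0 : Real.sin (b - a) * (p 0 - q 0) = 0 := by
    linear_combination (p 0 - q 0) * hsub + Real.sin b * h1 - Real.sin a * h2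
  have e1 : Real.sin (b - a) * (p 1 - q 1) = 0 := by
    linear_combination (p 1 - q 1) * hsub + Real.cos a * h2 - Real.cos b * h1
  have hp0 : p 0 = q 0 := by
    rcases mul_eq_zero.1 e0 with h' | h'
    · exact absurd h' h
    · linarith
  have hp1 : p 1 = q 1 := by
    rcases mul_eq_zero.1 e1 with h' | h'
    · exact absurd h' h
    · linarith
  funext k
  fin_cases k <;> assumption

lemma sin_theta_sub (r : ℕ) (hr : 2 ≤ r) (a g : ℕ) (hg1 : 1 ≤ g) (hgr : g < r) :
    Real.sin (((a+g:ℕ):ℝ) * π / r - (a:ℝ) * π / r) ≠ 0 := by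
  have hrR : (0:ℝ) < r := by positivity
  have hpi := Real.pi_pos
  have harg : ((a+g:ℕ):ℝ) * π / r - (a:ℝ) * π / r = (g:ℝ) * π / r := by
    push_cast; field_simp; ring
  rw [harg]
  apply ne_of_gt
  apply Real.sin_pos_of_pos_of_lt_pi
  · have : (1:ℝ) ≤ (g:ℝ) := by exact_mod_cast hg1
    positivity
  · rw [div_lt_iff₀ (by positivity)]
    have : (g:ℝ) < r := by exact_mod_cast hgr
    nlinarith

lemma Lr_smul_add (r j : ℕ) (t s : ℝ) (p q : Fin 2 → ℝ) :
    Lr r j (t • p + s • q) = t * Lr r j p + s * Lr r j q := by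
  unfold Lr
  simp only [Pi.add_apply, Pi.smul_apply, smul_eq_mul]
  ring

lemma Lr_add_smul (r j : ℕ) (t : ℝ) (p d : Fin 2 → ℝ) :
    Lr r j (p + t • d) = Lr r j p + t * Lr r j d := by
  unfold Lr
  simp only [Pi.add_apply, Pi.smul_apply, smul_eq_mul]
  ring

lemma unique_sol' (r : ℕ) (hr : 2 ≤ r) (a : ℕ) {g : ℕ} (hg1 : 1 ≤ g) (hgr : g < r)
    {p q : Fin 2 → ℝ} (h1 : Lr r a p = Lr r a q) (h2 : Lr r (a+g) p = Lr r (a+g) q) :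
    p = q := by
  unfold Lr at h1 h2
  exact unique_sol (sin_theta_sub r hr a g hg1 hgr) h1 h2

lemma w_extreme (r : ℕ) (hr : 2 ≤ r) (i : ℕ) : w r i ∈ Set.extremePoints ℝ (K r) := by
  rw [mem_extremePoints]
  refine ⟨w_mem_K r hr i, ?_⟩
  intro p hp q hq hseg
  obtain ⟨t, s, ht, hs, hts, heq⟩ := hseg
  have key : ∀ j : ℕ, Lr r j (w r i) = 1 → Lr r j p = 1 ∧ Lr r j q = 1 := by
    intro j hj
    have hcomb : t * Lr r j p + s * Lr r j q = 1 := by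
      rw [← Lr_smul_add, heq, hj]
    have h1 := hp j
    have h2 := hq j
    constructor <;> nlinarith
  obtain ⟨hp1, hq1⟩ := key i (Lr_w_self r hr i)
  obtain ⟨hp2, hq2⟩ := key (i+1) (Lr_w_succ r hr i)
  constructor
  · exact unique_sol' r hr i le_rfl (by omega)
      (hp1.trans (Lr_w_self r hr i).symm) (hp2.trans (Lr_w_succ r hr i).symm)
  · exact unique_sol' r hr i le_rfl (by omega)
      (hq1.trans (Lr_w_self r hr i).symm) (hq2.trans (Lr_w_succ r hr i).symm)

lemma Lr_pt (r : ℕ) (hr : 2 ≤ r) (j : ℕ) (μ δ : ℝ) (hδ : Real.cos δ ≠ 0) :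
    Lr r j ![Real.cos μ / Real.cos δ, Real.sin μ / Real.cos δ] =
      Real.cos ((j:ℝ) * π / r - μ) / Real.cos δ := by
  unfold Lr
  simp only [Matrix.cons_val_zero, Matrix.cons_val_one, Matrix.head_cons]
  rw [Real.cos_sub]
  ring

lemma eq_W_of_two (r : ℕ) (hr : 2 ≤ r) {p : Fin 2 → ℝ} (hp : p ∈ K r)
    (a g : ℕ) (hg1 : 1 ≤ g) (hgr : g < r)
    (ha : Lr r a p = 1) (hb : Lr r (a+g) p = 1) : p = w r a ∧ g = 1 := by
  have hrR : (0:ℝ) < r := by positivity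
  have hpi := Real.pi_pos
  have hgR : (1:ℝ) ≤ (g:ℝ) := by exact_mod_cast hg1
  have hgrR : (g:ℝ) < (r:ℝ) := by exact_mod_cast hgr
  set μ : ℝ := (2*(a:ℝ)+g) * π / (2*r) with hμ
  set δ : ℝ := (g:ℝ) * π / (2*r) with hδ
  have hδpos : 0 < δ := by rw [hδ]; positivity
  have hδlt : δ < π/2 := by
    rw [hδ, div_lt_div_iff₀ (by positivity) (by norm_num)]
    nlinarith
  have hcδ : 0 < Real.cos δ := Real.cos_pos_of_mem_Ioo ⟨by linarith, hδlt⟩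
  set P : Fin 2 → ℝ := ![Real.cos μ / Real.cos δ, Real.sin μ / Real.cos δ] with hP
  have hLa : Lr r a P = 1 := by
    rw [hP, Lr_pt r hr a μ δ hcδ.ne']
    have : (a:ℝ) * π / r - μ = -δ := by rw [hμ, hδ]; field_simp; ring
    rw [this, Real.cos_neg, div_self hcδ.ne']
  have hLb : Lr r (a+g) P = 1 := by
    rw [hP, Lr_pt r hr (a+g) μ δ hcδ.ne']
    have : ((a+g:ℕ):ℝ) * π / r - μ = δ := by rw [hμ, hδ]; push_cast; field_simp; ring
    rw [this, div_self hcδ.ne']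
  have hpP : p = P :=
    unique_sol' r hr a hg1 hgr (ha.trans hLa.symm) (hb.trans hLb.symm)
  have hg_eq : g = 1 := by
    by_contra hgne
    have hg2 : 2 ≤ g := by omega
    have hg2R : (2:ℝ) ≤ (g:ℝ) := by exact_mod_cast hg2
    -- the point violates the (a+1)-th constraint
    have hL1 : Lr r (a+1) P = Real.cos (((g:ℝ)-2) * π / (2*r)) / Real.cos δ := by
      rw [hP, Lr_pt r hr (a+1) μ δ hcδ.ne']
      congr 1
      have : ((a+1:ℕ):ℝ) * π / r - μ = -(((g:ℝ)-2) * π / (2*r)) := by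
        rw [hμ]; push_cast; field_simp; ring
      rw [this, Real.cos_neg]
    have hstrict : Real.cos δ < Real.cos (((g:ℝ)-2) * π / (2*r)) := by
      apply Real.cos_lt_cos_of_nonneg_of_le_pi
      · have : (0:ℝ) ≤ (g:ℝ) - 2 := by linarith
        positivity
      · have : δ < π := by linarith
        linarith
      · rw [hδ, div_lt_div_iff₀ (by positivity) (by positivity)]
        nlinarith
    have hgt : 1 < Lr r (a+1) P := by
      rw [hL1, lt_div_iff₀ hcδ]
      linarith
    have := hp (a+1)
    rw [hpP] at this
    linarith
  refine ⟨?_, hg_eq⟩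
  rw [hpP, hP]
  subst hg_eq
  unfold w
  norm_num [hμ, hδ]

open Classical in
lemma extreme_mem (r : ℕ) (hr : 2 ≤ r) {p : Fin 2 → ℝ}
    (hp : p ∈ Set.extremePoints ℝ (K r)) : ∃ i : ℕ, i < 2*r ∧ p = w r i := by
  rw [mem_extremePoints] at hp
  obtain ⟨hpK, hext⟩ := hp
  by_cases htwo : ∃ j₁ j₂, j₁ < j₂ ∧ j₂ < 2*r ∧ Lr r j₁ p = 1 ∧ Lr r j₂ p = 1
  · obtain ⟨j₁, j₂, hlt, h2r, h1, h2⟩ := htwo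
    set g : ℕ := j₂ - j₁ with hg
    have hg1 : 1 ≤ g := by omega
    rcases lt_trichotomy g r with hgr | hgr | hgr
    · -- direct case
      have hb : Lr r (j₁ + g) p = 1 := by
        have : j₁ + g = j₂ := by omega
        rw [this]; exact h2
      obtain ⟨hpw, -⟩ := eq_W_of_two r hr hpK j₁ g hg1 hgr h1 hb
      exact ⟨j₁, by omega, hpw⟩
    · -- antipodal: contradiction
      exfalso
      have : j₂ = j₁ + r := by omega
      rw [this, Lr_add_r r (by omega)] at h2
      linarith
    · -- swapped case
      have hg2r : g < 2*r := by omega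
      set g' : ℕ := 2*r - g with hg'
      have hb : Lr r (j₂ + g') p = 1 := by
        have : j₂ + g' = j₁ + 2*r := by omega
        rw [this, Lr_add_two_r r (by omega)]; exact h1
      obtain ⟨hpw, -⟩ := eq_W_of_two r hr hpK j₂ g' (by omega) (by omega) h2 hb
      exact ⟨j₂, h2r, hpw⟩
  · -- at most one active constraint : p is not extreme, contradiction
    exfalso
    push_neg at htwo
    have huniq : ∀ j₁ j₂, j₁ < 2*r → j₂ < 2*r → Lr r j₁ p = 1 → Lr r j₂ p = 1 → j₁ = j₂ := by
      intro j₁ j₂ ha hb e1 e2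
      by_contra hne
      rcases Nat.lt_or_ge j₁ j₂ with h | h
      · exact absurd e2 (htwo j₁ j₂ h hb e1)
      · have : j₂ < j₁ := by omega
        exact absurd e1 (htwo j₂ j₁ this ha e2)
    -- pick the (at most one) active index
    have hexj : ∃ j₀, ∀ j < 2*r, Lr r j p = 1 → j = j₀ := by
      by_cases hne : ∃ j < 2*r, Lr r j p = 1
      · obtain ⟨j₀, hj₀, hj₀1⟩ := hne
        exact ⟨j₀, fun j hj hj1 => huniq j j₀ hj hj₀ hj1 hj₀1⟩
      · push_neg at hne
        exact ⟨0, fun j hj hj1 => absurd hj1 (hne j hj)⟩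
    obtain ⟨j₀, hj₀⟩ := hexj
    set d : Fin 2 → ℝ := ![-Real.sin ((j₀:ℝ) * π / r), Real.cos ((j₀:ℝ) * π / r)] with hd
    have hd0 : Lr r j₀ d = 0 := by
      unfold Lr
      rw [hd]
      simp only [Matrix.cons_val_zero, Matrix.cons_val_one, Matrix.head_cons]
      ring
    have hdne : d ≠ 0 := by
      intro h0
      have h1 : -Real.sin ((j₀:ℝ) * π / r) = 0 := by
        have := congr_fun h0 0; simpa [hd] using this
      have h2 : Real.cos ((j₀:ℝ) * π / r) = 0 := by
        have := congr_fun h0 1; simpa [hd] using this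
      nlinarith [Real.sin_sq_add_cos_sq ((j₀:ℝ) * π / r)]
    have hdkey : ∀ j < 2*r, Lr r j p = 1 → Lr r j d = 0 := by
      intro j hj hj1
      rw [hj₀ j hj hj1]; exact hd0
    -- the perturbation size
    set F : ℕ → ℝ := fun j => if Lr r j p = 1 then 1 else (1 - Lr r j p)/(|Lr r j d| + 1)
      with hF
    have hrange : (Finset.range (2*r)).Nonempty := ⟨0, by simp; omega⟩
    set ε : ℝ := (Finset.range (2*r)).inf' hrange F with hε
    have hεpos : 0 < ε := by
      rw [hε, Finset.lt_inf'_iff]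
      intro j hj
      simp only [hF]
      split
      · norm_num
      · next h =>
        have hlt : Lr r j p < 1 := lt_of_le_of_ne (hpK j) h
        have habs : (0:ℝ) ≤ |Lr r j d| := abs_nonneg _
        apply div_pos (by linarith) (by positivity)
    have hεle : ∀ j < 2*r, ε ≤ F j := fun j hj =>
      Finset.inf'_le F (Finset.mem_range.2 hj)
    -- both perturbed points are in K
    have hmem : ∀ σ : ℝ, |σ| = 1 → p + (σ * ε) • d ∈ K r := by
      intro σ hσ
      apply mem_K_of r (by omega)
      intro j hj
      rw [Lr_add_smul]
      by_cases h1 : Lr r j p = 1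
      · rw [hdkey j hj h1, h1]; norm_num
      · have hlt : Lr r j p < 1 := lt_of_le_of_ne (hpK j) h1
        have hle := hεle j hj
        rw [hF] at hle
        simp only [h1, if_false] at hle
        have habs : (0:ℝ) ≤ |Lr r j d| := abs_nonneg _
        rw [le_div_iff₀ (by positivity)] at hle
        have hb : σ * ε * Lr r j d ≤ ε * |Lr r j d| := by
          have h' := le_abs_self (σ * ε * Lr r j d)
          rw [abs_mul, abs_mul, hσ, one_mul, abs_of_pos hεpos] at h'
          exact h'
        nlinarith
    have hm1 := hmem 1 (by norm_num)
    have hm2 := hmem (-1) (by norm_num)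
    rw [one_mul] at hm1
    have hseg : p ∈ openSegment ℝ (p + ε • d) (p + (-1 * ε) • d) :=
      ⟨1/2, 1/2, by norm_num, by norm_num, by norm_num, by module⟩
    obtain ⟨he1, -⟩ := hext _ hm1 _ hm2 hseg
    have : ε • d = 0 := by
      have := congr_arg (fun z => z - p) he1
      simpa [add_sub_cancel_left] using this
    rcases smul_eq_zero.1 this with h | h
    · exact hεpos.ne' h
    · exact hdne h

lemma w_inj (r : ℕ) (hr : 2 ≤ r) :
    Function.Injective (fun i : Fin (2*r) => w r (i : ℕ)) := by
  intro i i' h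
  simp only at h
  have hrR : (0:ℝ) < r := by positivity
  have hpi := Real.pi_pos
  have hc := cos_pos_aux r hr
  set ψ : ℝ := (2*(i:ℕ)+1) * π / (2*r) with hψ
  set ψ' : ℝ := (2*(i':ℕ)+1) * π / (2*r) with hψ'
  have h0 : Real.cos ψ = Real.cos ψ' := by
    have h' := congr_fun h 0
    simp only [w, Matrix.cons_val_zero] at h'
    field_simp at h'
    rw [hψ, hψ']
    push_cast at h' ⊢
    convert h' using 3 <;> ring
  have h1 : Real.sin ψ = Real.sin ψ' := by
    have h' := congr_fun h 1
    simp only [w, Matrix.cons_val_one, Matrix.head_cons] at h'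
    rw [Matrix.cons_val_zero, Matrix.cons_val_zero, div_left_inj' hc.ne'] at h'
    rw [hψ, hψ']
    push_cast at h' ⊢
    convert h' using 3 <;> ring
  have hcos1 : Real.cos (ψ - ψ') = 1 := by
    rw [Real.cos_sub, h0, h1]
    nlinarith [Real.sin_sq_add_cos_sq ψ']
  have hiR : ((i:ℕ):ℝ) < 2*r := by exact_mod_cast i.2
  have hi'R : ((i':ℕ):ℝ) < 2*r := by exact_mod_cast i'.2
  have hi0 : (0:ℝ) ≤ ((i:ℕ):ℝ) := by positivity
  have hi'0 : (0:ℝ) ≤ ((i':ℕ):ℝ) := by positivity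
  have hdiff : ψ - ψ' = (((i:ℕ):ℝ) - ((i':ℕ):ℝ)) * π / r := by
    rw [hψ, hψ']; field_simp; ring
  have hlt : ψ - ψ' < 2*π := by
    rw [hdiff, div_lt_iff₀ hrR]
    nlinarith
  have hgt : -(2*π) < ψ - ψ' := by
    rw [hdiff, lt_div_iff₀ hrR] at *
    nlinarith
  have := (Real.cos_eq_one_iff_of_lt_of_lt hgt hlt).1 hcos1
  rw [hdiff] at this
  have hzero : ((i:ℕ):ℝ) = ((i':ℕ):ℝ) := by
    rcases div_eq_zero_iff.1 this with h' | h'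
    · rcases mul_eq_zero.1 h' with h'' | h''
      · linarith
      · exact absurd h'' Real.pi_ne_zero
    · exact absurd h' hrR.ne'
  have : (i:ℕ) = (i':ℕ) := by exact_mod_cast hzero
  exact Fin.ext this

lemma planar_extremePoints (r : ℕ) (hr : 2 ≤ r) :
    Set.extremePoints ℝ (K r) = Set.range (fun i : Fin (2*r) => w r (i : ℕ)) := by
  apply Set.Subset.antisymm
  · intro p hp
    obtain ⟨i, hi, hpw⟩ := extreme_mem r hr hp
    exact ⟨⟨i, hi⟩, hpw.symm⟩
  · rintro p ⟨i, rfl⟩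
    exact w_extreme r hr i

lemma planar_count (r : ℕ) (hr : 2 ≤ r) :
    (Set.extremePoints ℝ (K r)).ncard = 2 * r := by
  rw [planar_extremePoints r hr, ← Set.image_univ,
    Set.ncard_image_of_injective _ (w_inj r hr), Set.ncard_univ, Nat.card_eq_fintype_card,
    Fintype.card_fin]

lemma dual_count {X : Type*} [NormedAddCommGroup X] [NormedSpace ℝ X]
    (r : ℕ) (hr : 2 ≤ r) (φ : (Fin 2 → ℝ) ≃ₗ[ℝ] X)
    (hext : Set.extremePoints ℝ (Metric.closedBall (0 : X) 1) =
      ⋃ k : Fin r,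
        {φ ![Real.cos ((k : ℕ) * Real.pi / r), Real.sin ((k : ℕ) * Real.pi / r)],
         -φ ![Real.cos ((k : ℕ) * Real.pi / r), Real.sin ((k : ℕ) * Real.pi / r)]}) :
    (Set.extremePoints ℝ (Metric.closedBall (0 : X →L[ℝ] ℝ) 1)).ncard = 2 * r := by
  haveI : FiniteDimensional ℝ X := Module.Finite.equiv φ
  set v : ℕ → X := fun k => φ ![Real.cos (k * π / r), Real.sin (k * π / r)] with hv
  -- the ball is the convex hull of the vertices
  have hEfin : (Set.extremePoints ℝ (Metric.closedBall (0 : X) 1)).Finite := by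
    rw [hext]
    exact Set.finite_iUnion fun k => (Set.finite_singleton _).insert _
  have hball : Metric.closedBall (0 : X) 1 =
      convexHull ℝ (Set.extremePoints ℝ (Metric.closedBall (0 : X) 1)) := by
    have hKM := closure_convexHull_extremePoints (isCompact_closedBall (0:X) 1)
      (convex_closedBall (0:X) 1)
    nth_rewrite 1 [← hKM]
    rw [(hEfin.isCompact_convexHull ℝ).isClosed.closure_eq]
  -- vertices are in the ball
  have hvball : ∀ k : ℕ, k < r → v k ∈ Metric.closedBall (0 : X) 1 := by
    intro k hk
    apply extremePoints_subset (A := Metric.closedBall (0 : X) 1) (𝕜 := ℝ)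
    rw [hext]
    exact Set.mem_iUnion.2 ⟨⟨k, hk⟩, by left; rfl⟩
  -- norm characterization of the dual ball
  have hnorm : ∀ f : X →L[ℝ] ℝ, ‖f‖ ≤ 1 ↔ ∀ k : ℕ, k < r → |f (v k)| ≤ 1 := by
    intro f
    constructor
    · intro hf k hk
      have h1 : ‖v k‖ ≤ 1 := mem_closedBall_zero_iff.1 (hvball k hk)
      calc |f (v k)| = ‖f (v k)‖ := (Real.norm_eq_abs _).symm
        _ ≤ ‖f‖ * ‖v k‖ := f.le_opNorm _
        _ ≤ 1 * 1 := mul_le_mul hf h1 (norm_nonneg _) (by linarith [norm_nonneg f])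
        _ = 1 := by norm_num
    · intro h
      have hsub : Metric.closedBall (0 : X) 1 ⊆ {x : X | f x ∈ Set.Icc (-1 : ℝ) 1} := by
        rw [hball]
        apply convexHull_min
        · rw [hext]
          rintro x hx
          obtain ⟨k, hk⟩ := Set.mem_iUnion.1 hx
          have hfk := h k k.2
          rcases hk with h' | h'
          · rw [Set.mem_setOf_eq, h']
            exact Set.mem_Icc.2 (abs_le.1 hfk)
          · rw [Set.mem_singleton_iff] at h'
            rw [Set.mem_setOf_eq, h', map_neg]
            have := abs_le.1 hfk
            exact Set.mem_Icc.2 ⟨by linarith [this.2], by linarith [this.1]⟩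
        · exact (convex_Icc (-1 : ℝ) 1).linear_preimage (f : X →ₗ[ℝ] ℝ)
      apply ContinuousLinearMap.opNorm_le_bound f zero_le_one
      intro x
      rcases eq_or_ne x 0 with rfl | hx
      · simp
      · have hxn : (0:ℝ) < ‖x‖ := norm_pos_iff.2 hx
        have hy : (‖x‖⁻¹ • x) ∈ Metric.closedBall (0 : X) 1 := by
          rw [mem_closedBall_zero_iff, norm_smul, norm_inv, norm_norm,
            inv_mul_cancel₀ hxn.ne']
        have := hsub hy
        rw [Set.mem_setOf_eq, map_smul, smul_eq_mul] at this
        have habs : |‖x‖⁻¹ * f x| ≤ 1 := abs_le.2 ⟨this.1, this.2⟩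
        rw [abs_mul, abs_inv, abs_norm] at habs
        rw [Real.norm_eq_abs, one_mul]
        calc |f x| = ‖x‖ * (‖x‖⁻¹ * |f x|) := by field_simp
          _ ≤ ‖x‖ * 1 := by
            apply mul_le_mul_of_nonneg_left _ hxn.le
            exact habs
          _ = ‖x‖ := mul_one _
  -- the coordinate linear equivalence with the planar model
  set Ψ : (X →L[ℝ] ℝ) ≃ₗ[ℝ] (Fin 2 → ℝ) :=
    (LinearMap.toContinuousLinearMap (𝕜 := ℝ) (E := X) (F' := ℝ)).symm.trans
      ((φ.symm.arrowCongr (LinearEquiv.refl ℝ ℝ)).trans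
        (LinearEquiv.piRing ℝ ℝ (Fin 2) ℝ)) with hΨ
  have hΨapp : ∀ (f : X →L[ℝ] ℝ) (i : Fin 2), Ψ f i = f (φ (Pi.single i 1)) := by
    intro f i
    simp [hΨ, LinearEquiv.arrowCongr, LinearEquiv.piRing_apply]
  have hvec : ∀ c s : ℝ, (c • (Pi.single (0 : Fin 2) (1:ℝ) : Fin 2 → ℝ) + s • (Pi.single (1 : Fin 2) (1:ℝ) : Fin 2 → ℝ)) = ![c, s] := by
    intro c s
    funext i
    fin_cases i <;> simp
  have hLψ : ∀ (f : X →L[ℝ] ℝ) (k : ℕ), Lr r k (Ψ f) = f (v k) := by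
    intro f k
    unfold Lr
    rw [hΨapp, hΨapp, hv]
    simp only []
    rw [← hvec (Real.cos (k * π / r)) (Real.sin (k * π / r)), map_add, map_smul, map_smul,
      map_add, map_smul, map_smul, smul_eq_mul, smul_eq_mul]
  -- the image of the ball is K r
  have himg : Ψ '' (Metric.closedBall (0 : X →L[ℝ] ℝ) 1) = K r := by
    ext y
    constructor
    · rintro ⟨f, hf, rfl⟩
      rw [mem_K_iff r (by omega)]
      intro k
      rw [hLψ]
      exact (hnorm f).1 (mem_closedBall_zero_iff.1 hf) k k.2
    · intro hy
      refine ⟨Ψ.symm y, ?_, Ψ.apply_symm_apply y⟩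
      rw [mem_closedBall_zero_iff, hnorm]
      intro k hk
      rw [← hLψ (Ψ.symm y) k, Ψ.apply_symm_apply]
      exact abs_Lr_le (by omega) hy k
  -- transfer the count
  have himgext : Ψ '' (Set.extremePoints ℝ (Metric.closedBall (0 : X →L[ℝ] ℝ) 1)) =
      Set.extremePoints ℝ (K r) := by
    rw [image_extremePoints, himg]
  rw [← planar_count r hr, ← himgext, Set.ncard_image_of_injective _ Ψ.injective]

/-- operators into `ℓ∞ⁿ` are isometrically the product of `n` functionals -/
def eqvPi (X : Type*) [NormedAddCommGroup X] [NormedSpace ℝ X] (n : ℕ) :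
    (X →L[ℝ] (Fin n → ℝ)) ≃ₗᵢ[ℝ] (Fin n → (X →L[ℝ] ℝ)) where
  toLinearEquiv :=
    { toFun := fun T i => (ContinuousLinearMap.proj i).comp T
      map_add' := fun T S => by funext i; ext x; simp
      map_smul' := fun c T => by funext i; ext x; simp
      invFun := fun F => ContinuousLinearMap.pi F
      left_inv := fun T => by ext x; rfl
      right_inv := fun F => by funext i; ext x; rfl }
  norm_map' := fun T => by
    apply le_antisymm
    · apply (pi_norm_le_iff_of_nonneg (norm_nonneg T)).2
      intro i
      apply ContinuousLinearMap.opNorm_le_bound _ (norm_nonneg T)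
      intro x
      calc ‖((ContinuousLinearMap.proj i).comp T) x‖ = ‖T x i‖ := rfl
        _ ≤ ‖T x‖ := norm_le_pi_norm (T x) i
        _ ≤ ‖T‖ * ‖x‖ := T.le_opNorm x
    · apply ContinuousLinearMap.opNorm_le_bound _ (norm_nonneg _)
      intro x
      apply (pi_norm_le_iff_of_nonneg (by positivity)).2
      intro i
      calc ‖T x i‖ = ‖((ContinuousLinearMap.proj i).comp T) x‖ := rfl
        _ ≤ ‖(ContinuousLinearMap.proj i).comp T‖ * ‖x‖ :=
            ((ContinuousLinearMap.proj i).comp T).le_opNorm x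
        _ ≤ ‖fun j => (ContinuousLinearMap.proj (R := ℝ) (φ := fun _ : Fin n => ℝ) j).comp T‖ * ‖x‖ :=
            mul_le_mul_of_nonneg_right
              (norm_le_pi_norm (fun j => (ContinuousLinearMap.proj j).comp T) i) (norm_nonneg x)

lemma ncard_univ_pi {ι : Type*} [Fintype ι] {α : ι → Type*} (s : ∀ i, Set (α i)) :
    (Set.pi Set.univ s).ncard = ∏ i, (s i).ncard := by
  have e : ↥(Set.pi Set.univ s) ≃ (∀ i, ↥(s i)) :=
    { toFun := fun x i => ⟨x.1 i, x.2 i (Set.mem_univ i)⟩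
      invFun := fun x => ⟨fun i => (x i).1, fun i _ => (x i).2⟩
      left_inv := fun x => rfl
      right_inv := fun x => rfl }
  rw [← Nat.card_coe_set_eq, Nat.card_congr e, Nat.card_pi]
  exact Finset.prod_congr rfl fun i _ => Nat.card_coe_set_eq _

end
end Stmt15

/-- let `r ≥ 2` and let `X` be `ℝ²` equipped with a norm whose closed unit
ball has set of extreme points exactly `{±(cos (kπ/r), sin (kπ/r)) : k = 0, …, r−1}`
(a regular `2r`-gon). Then the closed unit ball of `L(X, ℓ∞^n)` (operators with the
operator norm) has exactly `(2r)^n` extreme points. Here `X` is a real normed space whose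
underlying vector space is identified with `ℝ²` via the linear equivalence `φ`. -/
theorem stmt15 {X : Type*} [NormedAddCommGroup X] [NormedSpace ℝ X]
    (r n : ℕ) (hr : 2 ≤ r) (φ : (Fin 2 → ℝ) ≃ₗ[ℝ] X)
    (hext : Set.extremePoints ℝ (Metric.closedBall (0 : X) 1) =
      ⋃ k : Fin r,
        {φ ![Real.cos ((k : ℕ) * Real.pi / r), Real.sin ((k : ℕ) * Real.pi / r)],
         -φ ![Real.cos ((k : ℕ) * Real.pi / r), Real.sin ((k : ℕ) * Real.pi / r)]}) :
    (Set.extremePoints ℝ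
      (Metric.closedBall (0 : X →L[ℝ] (Fin n → ℝ)) 1)).ncard = (2 * r) ^ n := by
  classical
  have hdual := Stmt15.dual_count r hr φ hext
  set e := Stmt15.eqvPi X n with he
  have h1 : ⇑e '' (Metric.closedBall (0 : X →L[ℝ] (Fin n → ℝ)) 1) =
      Metric.closedBall (0 : Fin n → (X →L[ℝ] ℝ)) 1 := by
    ext y
    constructor
    · rintro ⟨T, hT, rfl⟩
      rw [mem_closedBall_zero_iff] at hT ⊢
      rw [e.norm_map]; exact hT
    · intro hy
      refine ⟨e.symm y, ?_, e.apply_symm_apply y⟩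
      rw [mem_closedBall_zero_iff] at hy ⊢
      rw [← e.apply_symm_apply y, e.norm_map] at hy
      exact hy
  have h2 : ⇑e '' (Set.extremePoints ℝ (Metric.closedBall (0 : X →L[ℝ] (Fin n → ℝ)) 1)) =
      Set.extremePoints ℝ (Metric.closedBall (0 : Fin n → (X →L[ℝ] ℝ)) 1) := by
    rw [image_extremePoints, h1]
  have h3 : Metric.closedBall (0 : Fin n → (X →L[ℝ] ℝ)) 1 =
      Set.pi Set.univ (fun _ : Fin n => Metric.closedBall (0 : X →L[ℝ] ℝ) 1) := by
    rw [closedBall_pi _ zero_le_one]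
    rfl
  rw [← Set.ncard_image_of_injective _ e.injective, h2, h3, extremePoints_pi,
    Stmt15.ncard_univ_pi]
  simp [hdual]
end
end

section
/- Let X be the real normed space ℝ³ equipped with a norm whose closed unit ball has set of extreme points exactly {±(1,0,0), ±(0,1,0), ±(1,1,0), ±(0,0,1)}. Then the number of extreme points of the closed unit ball of L(X, ℓ∞^n), the space of linear operators from X to ℓ∞^n with the operator norm, equals 12^n. -/
noncomputable section

open Set Metric

namespace Stmt18Aux

variable {X : Type*} [NormedAddCommGroup X] [NormedSpace ℝ X]


def cvec (v : Fin 3 → ℤ) : Fin 3 → ℝ := fun i => (v i : ℝ)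

def Wf : Finset (Fin 3 → ℤ) :=
  {![1,0,1], ![0,1,1], ![1,-1,1], ![-1,0,1], ![0,-1,1], ![-1,1,1],
   ![1,0,-1], ![0,1,-1], ![1,-1,-1], ![-1,0,-1], ![0,-1,-1], ![-1,1,-1]}

def V : Set (Fin 3 → ℝ) := cvec '' ↑Wf

def P : Set (Fin 3 → ℝ) := {w | |w 0| ≤ 1 ∧ |w 1| ≤ 1 ∧ |w 0 + w 1| ≤ 1 ∧ |w 2| ≤ 1}

lemma cvec_inj : Function.Injective cvec := by
  intro x y h
  funext i
  have := congr_fun h i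
  simp only [cvec] at this
  exact_mod_cast this

lemma cardV : V.ncard = 12 := by
  rw [V, Set.ncard_image_of_injective _ cvec_inj, Set.ncard_coe_finset]
  decide

lemma cvec_eq (x y z : ℤ) : cvec ![x, y, z] = ![(x:ℝ), (y:ℝ), (z:ℝ)] := by
  funext i; fin_cases i <;> simp [cvec]

lemma combo_abs {a b x y : ℝ} (ha : 0 ≤ a) (hb : 0 ≤ b) (hab : a + b = 1)
    (hx : |x| ≤ 1) (hy : |y| ≤ 1) : |a * x + b * y| ≤ 1 := by
  calc |a * x + b * y| ≤ |a * x| + |b * y| := abs_add_le _ _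
    _ = a * |x| + b * |y| := by rw [abs_mul, abs_mul, abs_of_nonneg ha, abs_of_nonneg hb]
    _ ≤ a * 1 + b * 1 := by gcongr
    _ = 1 := by linarith

lemma convexP : Convex ℝ P := by
  intro x hx y hy a b ha hb hab
  obtain ⟨hx0, hx1, hx01, hx2⟩ := hx
  obtain ⟨hy0, hy1, hy01, hy2⟩ := hy
  refine ⟨?_, ?_, ?_, ?_⟩ <;>
    simp only [Pi.add_apply, Pi.smul_apply, smul_eq_mul]
  · exact combo_abs ha hb hab hx0 hy0
  · exact combo_abs ha hb hab hx1 hy1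
  · rw [show a * x 0 + b * y 0 + (a * x 1 + b * y 1)
        = a * (x 0 + x 1) + b * (y 0 + y 1) by ring]
    exact combo_abs ha hb hab hx01 hy01
  · exact combo_abs ha hb hab hx2 hy2

lemma VsubP : V ⊆ P := by
  rintro v ⟨w, hw, rfl⟩
  rw [Finset.mem_coe] at hw
  fin_cases hw <;> refine ⟨?_, ?_, ?_, ?_⟩ <;> norm_num [cvec, Matrix.cons_val_two]

lemma mem_V' (x y s : ℝ) (hs : s = 1 ∨ s = -1) (xi yi : ℤ)
    (hx : (xi:ℝ) = x) (hy : (yi:ℝ) = y)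
    (h1 : ![xi, yi, (1:ℤ)] ∈ Wf) (h2 : ![xi, yi, (-1:ℤ)] ∈ Wf) :
    ![x, y, s] ∈ V := by
  rcases hs with rfl | rfl
  · refine ⟨![xi, yi, 1], h1, ?_⟩
    funext j; fin_cases j <;> simp [cvec, hx, hy]
  · refine ⟨![xi, yi, -1], h2, ?_⟩
    funext j; fin_cases j <;> simp [cvec, hx, hy]

lemma comboV (a b s : ℝ) (w : Fin 4 → ℝ) (z : Fin 4 → (Fin 3 → ℝ))
    (h0 : ∀ i, 0 ≤ w i) (h1 : w 0 + w 1 + w 2 + w 3 = 1) (hz : ∀ i, z i ∈ V)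
    (heq : ![a, b, s] = w 0 • z 0 + w 1 • z 1 + w 2 • z 2 + w 3 • z 3) :
    ![a, b, s] ∈ convexHull ℝ V := by
  have hmem := (convex_convexHull ℝ V).sum_mem (t := (Finset.univ : Finset (Fin 4)))
    (fun i _ => h0 i) (by rw [Fin.sum_univ_four]; exact h1) (fun i _ => subset_convexHull ℝ V (hz i))
  rwa [Fin.sum_univ_four, ← heq] at hmem

lemma hexLift (a b s : ℝ) (hs : s = 1 ∨ s = -1)
    (h0 : -1 ≤ a ∧ a ≤ 1) (h1 : -1 ≤ b ∧ b ≤ 1) (h01 : -1 ≤ a + b ∧ a + b ≤ 1) :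
    ![a, b, s] ∈ convexHull ℝ V := by
  rcases le_total 0 a with hA | hA <;> rcases le_total 0 b with hB | hB
  · -- a ≥ 0, b ≥ 0
    refine comboV a b s ![(1 + a - b)/2, b, (1 - a - b)/2, 0]
      ![![1, 0, s], ![0, 1, s], ![-1, 0, s], ![1, 0, s]] ?_ (by norm_num [Matrix.cons_val_two, Matrix.cons_val_three]; try ring) ?_ ?_
    · intro i; fin_cases i <;> simp <;> linarith
    · intro i; fin_cases i <;> simp <;>
        [exact mem_V' 1 0 s hs 1 0 (by norm_num) (by norm_num) (by decide) (by decide);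
         exact mem_V' 0 1 s hs 0 1 (by norm_num) (by norm_num) (by decide) (by decide);
         exact mem_V' (-1) 0 s hs (-1) 0 (by norm_num) (by norm_num) (by decide) (by decide);
         exact mem_V' 1 0 s hs 1 0 (by norm_num) (by norm_num) (by decide) (by decide)]
    · funext i; fin_cases i <;> simp <;> try ring
  · -- a ≥ 0, b ≤ 0
    refine comboV a b s
      ![a*(1+b) + (1-a)*(1+b)/2, (1-a)*(1+b)/2, (1-a)*(-b), a*(-b)]
      ![![1, 0, s], ![-1, 0, s], ![0, -1, s], ![1, -1, s]] ?_ (by norm_num [Matrix.cons_val_two, Matrix.cons_val_three]; try ring) ?_ ?_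
    · intro i; fin_cases i <;> simp <;>
        nlinarith [mul_nonneg hA (show (0:ℝ) ≤ 1 + b by linarith),
          mul_nonneg (show (0:ℝ) ≤ 1 - a by linarith) (show (0:ℝ) ≤ 1 + b by linarith),
          mul_nonneg hA (show (0:ℝ) ≤ -b by linarith),
          mul_nonneg (show (0:ℝ) ≤ 1 - a by linarith) (show (0:ℝ) ≤ -b by linarith)]
    · intro i; fin_cases i <;> simp <;>
        [exact mem_V' 1 0 s hs 1 0 (by norm_num) (by norm_num) (by decide) (by decide);
         exact mem_V' (-1) 0 s hs (-1) 0 (by norm_num) (by norm_num) (by decide) (by decide);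
         exact mem_V' 0 (-1) s hs 0 (-1) (by norm_num) (by norm_num) (by decide) (by decide);
         exact mem_V' 1 (-1) s hs 1 (-1) (by norm_num) (by norm_num) (by decide) (by decide)]
    · funext i; fin_cases i <;> simp <;> try ring
  · -- a ≤ 0, b ≥ 0
    refine comboV a b s
      ![(-a)*(1-b) + (1+a)*(1-b)/2, (1+a)*(1-b)/2, (1+a)*b, (-a)*b]
      ![![-1, 0, s], ![1, 0, s], ![0, 1, s], ![-1, 1, s]] ?_ (by norm_num [Matrix.cons_val_two, Matrix.cons_val_three]; try ring) ?_ ?_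
    · intro i; fin_cases i <;> simp <;>
        nlinarith [mul_nonneg (show (0:ℝ) ≤ -a by linarith) (show (0:ℝ) ≤ 1 - b by linarith),
          mul_nonneg (show (0:ℝ) ≤ 1 + a by linarith) (show (0:ℝ) ≤ 1 - b by linarith),
          mul_nonneg (show (0:ℝ) ≤ 1 + a by linarith) hB,
          mul_nonneg (show (0:ℝ) ≤ -a by linarith) hB]
    · intro i; fin_cases i <;> simp <;>
        [exact mem_V' (-1) 0 s hs (-1) 0 (by norm_num) (by norm_num) (by decide) (by decide);
         exact mem_V' 1 0 s hs 1 0 (by norm_num) (by norm_num) (by decide) (by decide);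
         exact mem_V' 0 1 s hs 0 1 (by norm_num) (by norm_num) (by decide) (by decide);
         exact mem_V' (-1) 1 s hs (-1) 1 (by norm_num) (by norm_num) (by decide) (by decide)]
    · funext i; fin_cases i <;> simp <;> try ring
  · -- a ≤ 0, b ≤ 0
    refine comboV a b s ![(1 - a + b)/2, -b, (1 + a + b)/2, 0]
      ![![-1, 0, s], ![0, -1, s], ![1, 0, s], ![-1, 0, s]] ?_ (by norm_num [Matrix.cons_val_two, Matrix.cons_val_three]; try ring) ?_ ?_
    · intro i; fin_cases i <;> simp <;> linarith
    · intro i; fin_cases i <;> simp <;>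
        [exact mem_V' (-1) 0 s hs (-1) 0 (by norm_num) (by norm_num) (by decide) (by decide);
         exact mem_V' 0 (-1) s hs 0 (-1) (by norm_num) (by norm_num) (by decide) (by decide);
         exact mem_V' 1 0 s hs 1 0 (by norm_num) (by norm_num) (by decide) (by decide);
         exact mem_V' (-1) 0 s hs (-1) 0 (by norm_num) (by norm_num) (by decide) (by decide)]
    · funext i; fin_cases i <;> simp <;> try ring

lemma hullVP : convexHull ℝ V = P := by
  refine Subset.antisymm (convexHull_min VsubP convexP) ?_
  rintro w ⟨h0, h1, h01, h2⟩
  rw [abs_le] at h0 h1 h01 h2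
  have hu : ![w 0, w 1, (1:ℝ)] ∈ convexHull ℝ V := hexLift _ _ _ (Or.inl rfl) h0 h1 h01
  have hl : ![w 0, w 1, (-1:ℝ)] ∈ convexHull ℝ V := hexLift _ _ _ (Or.inr rfl) h0 h1 h01
  have hc := (convex_convexHull ℝ V) hu hl
    (show (0:ℝ) ≤ (1 + w 2)/2 by linarith) (show (0:ℝ) ≤ (1 - w 2)/2 by linarith)
    (by ring)
  have : w = ((1 + w 2)/2) • ![w 0, w 1, (1:ℝ)] + ((1 - w 2)/2) • ![w 0, w 1, (-1:ℝ)] := by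
    funext i; fin_cases i <;> simp <;> try ring
  rwa [← this] at hc





lemma exposed (z : Fin 3 → ℝ) (hz : z ∈ P) (c0 c1 c2 m : ℝ)
    (hmax : ∀ y ∈ P, c0 * y 0 + c1 * y 1 + c2 * y 2 ≤ m)
    (hzm : c0 * z 0 + c1 * z 1 + c2 * z 2 = m)
    (huniq : ∀ y ∈ P, c0 * y 0 + c1 * y 1 + c2 * y 2 = m → y = z) :
    z ∈ Set.extremePoints ℝ P := by
  refine ⟨hz, fun x hx y hy hseg => ?_⟩
  obtain ⟨t, u, ht, hu, htu, hsum⟩ := hseg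
  have e : ∀ i, t * x i + u * y i = z i := fun i => by
    rw [← hsum]; simp [smul_eq_mul]
  have e0 := e 0; have e1 := e 1; have e2 := e 2
  have hgz : t * (c0 * x 0 + c1 * x 1 + c2 * x 2) + u * (c0 * y 0 + c1 * y 1 + c2 * y 2) = m := by
    linear_combination c0 * e0 + c1 * e1 + c2 * e2 + hzm
  have gx := hmax x hx
  have gy := hmax y hy
  have p1 : 0 ≤ t * (m - (c0 * x 0 + c1 * x 1 + c2 * x 2)) :=
    mul_nonneg ht.le (by linarith)
  have p2 : 0 ≤ u * (m - (c0 * y 0 + c1 * y 1 + c2 * y 2)) :=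
    mul_nonneg hu.le (by linarith)
  have hsum0 : t * (m - (c0 * x 0 + c1 * x 1 + c2 * x 2))
      + u * (m - (c0 * y 0 + c1 * y 1 + c2 * y 2)) = 0 := by
    linear_combination m * htu - hgz
  have q1 : t * (m - (c0 * x 0 + c1 * x 1 + c2 * x 2)) = 0 := by linarith
  have q2 : u * (m - (c0 * y 0 + c1 * y 1 + c2 * y 2)) = 0 := by linarith
  have hx' : c0 * x 0 + c1 * x 1 + c2 * x 2 = m := by
    rcases mul_eq_zero.1 q1 with h | h
    · exact absurd h ht.ne'
    · linarith
  have hy' : c0 * y 0 + c1 * y 1 + c2 * y 2 = m := by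
    rcases mul_eq_zero.1 q2 with h | h
    · exact absurd h hu.ne'
    · linarith
  exact huniq x hx hx'


lemma VsubExt : V ⊆ Set.extremePoints ℝ P := by
  rintro v ⟨w, hw, rfl⟩
  rw [Finset.mem_coe] at hw
  fin_cases hw
  · refine exposed _ (by refine ⟨?_, ?_, ?_, ?_⟩ <;> norm_num [cvec, Matrix.cons_val_two]) (2) (1) (3) 5 ?_
      (by norm_num [cvec, Matrix.cons_val_two]) ?_
    · rintro y ⟨a0, a1, a01, a2⟩; rw [abs_le] at a0 a1 a01 a2; linarith
    · rintro y ⟨a0, a1, a01, a2⟩ heq; rw [abs_le] at a0 a1 a01 a2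
      funext j; fin_cases j <;> simp [cvec] <;> linarith
  · refine exposed _ (by refine ⟨?_, ?_, ?_, ?_⟩ <;> norm_num [cvec, Matrix.cons_val_two]) (1) (2) (3) 5 ?_
      (by norm_num [cvec, Matrix.cons_val_two]) ?_
    · rintro y ⟨a0, a1, a01, a2⟩; rw [abs_le] at a0 a1 a01 a2; linarith
    · rintro y ⟨a0, a1, a01, a2⟩ heq; rw [abs_le] at a0 a1 a01 a2
      funext j; fin_cases j <;> simp [cvec] <;> linarith
  · refine exposed _ (by refine ⟨?_, ?_, ?_, ?_⟩ <;> norm_num [cvec, Matrix.cons_val_two]) (1) (-1) (3) 5 ?_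
      (by norm_num [cvec, Matrix.cons_val_two]) ?_
    · rintro y ⟨a0, a1, a01, a2⟩; rw [abs_le] at a0 a1 a01 a2; linarith
    · rintro y ⟨a0, a1, a01, a2⟩ heq; rw [abs_le] at a0 a1 a01 a2
      funext j; fin_cases j <;> simp [cvec] <;> linarith
  · refine exposed _ (by refine ⟨?_, ?_, ?_, ?_⟩ <;> norm_num [cvec, Matrix.cons_val_two]) (-2) (-1) (3) 5 ?_
      (by norm_num [cvec, Matrix.cons_val_two]) ?_
    · rintro y ⟨a0, a1, a01, a2⟩; rw [abs_le] at a0 a1 a01 a2; linarith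
    · rintro y ⟨a0, a1, a01, a2⟩ heq; rw [abs_le] at a0 a1 a01 a2
      funext j; fin_cases j <;> simp [cvec] <;> linarith
  · refine exposed _ (by refine ⟨?_, ?_, ?_, ?_⟩ <;> norm_num [cvec, Matrix.cons_val_two]) (-1) (-2) (3) 5 ?_
      (by norm_num [cvec, Matrix.cons_val_two]) ?_
    · rintro y ⟨a0, a1, a01, a2⟩; rw [abs_le] at a0 a1 a01 a2; linarith
    · rintro y ⟨a0, a1, a01, a2⟩ heq; rw [abs_le] at a0 a1 a01 a2
      funext j; fin_cases j <;> simp [cvec] <;> linarith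
  · refine exposed _ (by refine ⟨?_, ?_, ?_, ?_⟩ <;> norm_num [cvec, Matrix.cons_val_two]) (-1) (1) (3) 5 ?_
      (by norm_num [cvec, Matrix.cons_val_two]) ?_
    · rintro y ⟨a0, a1, a01, a2⟩; rw [abs_le] at a0 a1 a01 a2; linarith
    · rintro y ⟨a0, a1, a01, a2⟩ heq; rw [abs_le] at a0 a1 a01 a2
      funext j; fin_cases j <;> simp [cvec] <;> linarith
  · refine exposed _ (by refine ⟨?_, ?_, ?_, ?_⟩ <;> norm_num [cvec, Matrix.cons_val_two]) (2) (1) (-3) 5 ?_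
      (by norm_num [cvec, Matrix.cons_val_two]) ?_
    · rintro y ⟨a0, a1, a01, a2⟩; rw [abs_le] at a0 a1 a01 a2; linarith
    · rintro y ⟨a0, a1, a01, a2⟩ heq; rw [abs_le] at a0 a1 a01 a2
      funext j; fin_cases j <;> simp [cvec] <;> linarith
  · refine exposed _ (by refine ⟨?_, ?_, ?_, ?_⟩ <;> norm_num [cvec, Matrix.cons_val_two]) (1) (2) (-3) 5 ?_
      (by norm_num [cvec, Matrix.cons_val_two]) ?_
    · rintro y ⟨a0, a1, a01, a2⟩; rw [abs_le] at a0 a1 a01 a2; linarith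
    · rintro y ⟨a0, a1, a01, a2⟩ heq; rw [abs_le] at a0 a1 a01 a2
      funext j; fin_cases j <;> simp [cvec] <;> linarith
  · refine exposed _ (by refine ⟨?_, ?_, ?_, ?_⟩ <;> norm_num [cvec, Matrix.cons_val_two]) (1) (-1) (-3) 5 ?_
      (by norm_num [cvec, Matrix.cons_val_two]) ?_
    · rintro y ⟨a0, a1, a01, a2⟩; rw [abs_le] at a0 a1 a01 a2; linarith
    · rintro y ⟨a0, a1, a01, a2⟩ heq; rw [abs_le] at a0 a1 a01 a2
      funext j; fin_cases j <;> simp [cvec] <;> linarith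
  · refine exposed _ (by refine ⟨?_, ?_, ?_, ?_⟩ <;> norm_num [cvec, Matrix.cons_val_two]) (-2) (-1) (-3) 5 ?_
      (by norm_num [cvec, Matrix.cons_val_two]) ?_
    · rintro y ⟨a0, a1, a01, a2⟩; rw [abs_le] at a0 a1 a01 a2; linarith
    · rintro y ⟨a0, a1, a01, a2⟩ heq; rw [abs_le] at a0 a1 a01 a2
      funext j; fin_cases j <;> simp [cvec] <;> linarith
  · refine exposed _ (by refine ⟨?_, ?_, ?_, ?_⟩ <;> norm_num [cvec, Matrix.cons_val_two]) (-1) (-2) (-3) 5 ?_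
      (by norm_num [cvec, Matrix.cons_val_two]) ?_
    · rintro y ⟨a0, a1, a01, a2⟩; rw [abs_le] at a0 a1 a01 a2; linarith
    · rintro y ⟨a0, a1, a01, a2⟩ heq; rw [abs_le] at a0 a1 a01 a2
      funext j; fin_cases j <;> simp [cvec] <;> linarith
  · refine exposed _ (by refine ⟨?_, ?_, ?_, ?_⟩ <;> norm_num [cvec, Matrix.cons_val_two]) (-1) (1) (-3) 5 ?_
      (by norm_num [cvec, Matrix.cons_val_two]) ?_
    · rintro y ⟨a0, a1, a01, a2⟩; rw [abs_le] at a0 a1 a01 a2; linarith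
    · rintro y ⟨a0, a1, a01, a2⟩ heq; rw [abs_le] at a0 a1 a01 a2
      funext j; fin_cases j <;> simp [cvec] <;> linarith

lemma extP : Set.extremePoints ℝ P = V := by
  refine Subset.antisymm ?_ VsubExt
  rw [← hullVP]
  exact extremePoints_convexHull_subset



/-- `L(X, ℓ∞ⁿ)` is isometric to `(X*)ⁿ` with sup norm. -/
noncomputable def opPi (n : ℕ) : (X →L[ℝ] (Fin n → ℝ)) ≃ₗᵢ[ℝ] (Fin n → (X →L[ℝ] ℝ)) where
  toLinearEquiv :=
    { toFun := fun T i => (ContinuousLinearMap.proj i).comp T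
      map_add' := fun T S => by ext i x; simp
      map_smul' := fun c T => by ext i x; simp
      invFun := fun f => ContinuousLinearMap.pi f
      left_inv := fun T => by ext x i; rfl
      right_inv := fun f => by ext i x; rfl }
  norm_map' := by
    intro T
    refine le_antisymm ?_ ?_
    · refine pi_norm_le_iff_of_nonneg (norm_nonneg T) |>.2 fun i => ?_
      refine ContinuousLinearMap.opNorm_le_bound _ (norm_nonneg T) fun x => ?_
      calc ‖(ContinuousLinearMap.proj (R := ℝ) (φ := fun _ : Fin n => ℝ) i) (T x)‖
          ≤ ‖T x‖ := by
            simpa using norm_le_pi_norm (T x) i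
        _ ≤ ‖T‖ * ‖x‖ := T.le_opNorm x
    · refine ContinuousLinearMap.opNorm_le_bound _ (norm_nonneg _) fun x => ?_
      refine pi_norm_le_iff_of_nonneg (by positivity) |>.2 fun i => ?_
      calc ‖T x i‖ = ‖((ContinuousLinearMap.proj i).comp T) x‖ := rfl
        _ ≤ ‖(ContinuousLinearMap.proj (R := ℝ) (φ := fun _ : Fin n => ℝ) i).comp T‖ * ‖x‖ :=
            ContinuousLinearMap.le_opNorm _ x
        _ ≤ ‖fun i => (ContinuousLinearMap.proj (R := ℝ)
              (φ := fun _ : Fin n => ℝ) i).comp T‖ * ‖x‖ := by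
            gcongr
            exact norm_le_pi_norm (fun i => (ContinuousLinearMap.proj (R := ℝ)
              (φ := fun _ : Fin n => ℝ) i).comp T) i


lemma ncard_pi_const {α : Type*} (n : ℕ) (s : Set α) :
    (Set.pi (univ : Set (Fin n)) fun _ => s).ncard = s.ncard ^ n := by
  rw [← Nat.card_coe_set_eq, ← Nat.card_coe_set_eq]
  have e : ↥(Set.pi (univ : Set (Fin n)) fun _ => s) ≃ (Fin n → ↥s) :=
    { toFun := fun f i => ⟨f.1 i, f.2 i (mem_univ i)⟩
      invFun := fun g => ⟨fun i => (g i).1, fun i _ => (g i).2⟩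
      left_inv := fun f => rfl
      right_inv := fun g => rfl }
  rw [Nat.card_congr e, Nat.card_fun]
  simp

end Stmt18Aux

open Stmt18Aux Set Metric in
/-- let `X` be `ℝ³` equipped with a norm whose closed unit ball has set of
extreme points exactly `{±(1,0,0), ±(0,1,0), ±(1,1,0), ±(0,0,1)}`. Then the closed unit
ball of `L(X, ℓ∞^n)` (operators with the operator norm) has exactly `12^n` extreme points.
Here `X` is a real normed space whose underlying vector space is identified with `ℝ³` via
the linear equivalence `φ`. -/
theorem stmt18 {X : Type*} [NormedAddCommGroup X] [NormedSpace ℝ X]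
    (n : ℕ) (φ : (Fin 3 → ℝ) ≃ₗ[ℝ] X)
    (hext : Set.extremePoints ℝ (Metric.closedBall (0 : X) 1) =
      {φ ![1, 0, 0], φ ![0, 1, 0], φ ![1, 1, 0], φ ![0, 0, 1],
       -φ ![1, 0, 0], -φ ![0, 1, 0], -φ ![1, 1, 0], -φ ![0, 0, 1]}) :
    (Set.extremePoints ℝ
      (Metric.closedBall (0 : X →L[ℝ] (Fin n → ℝ)) 1)).ncard = 12 ^ n := by
  classical
  haveI : Module.Finite ℝ X := Module.Finite.equiv φ
  set S : Set X := {φ ![1, 0, 0], φ ![0, 1, 0], φ ![1, 1, 0], φ ![0, 0, 1],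
       -φ ![1, 0, 0], -φ ![0, 1, 0], -φ ![1, 1, 0], -φ ![0, 0, 1]} with hSdef
  have hSfin : S.Finite := by
    rw [hSdef]
    exact (((((((Set.finite_singleton _).insert _).insert _).insert _).insert
      _).insert _).insert _).insert _
  -- Krein-Milman: the ball is the convex hull of its extreme points
  have hball : closedBall (0 : X) 1 = convexHull ℝ S := by
    have h := closure_convexHull_extremePoints (isCompact_closedBall (0 : X) 1)
      (convex_closedBall (0 : X) 1)
    rw [hext] at h
    rw [← h]
    exact ((hSfin.isCompact_convexHull ℝ).isClosed).closure_eq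
  -- characterization of the dual ball
  have hfun : ∀ f : X →L[ℝ] ℝ, ‖f‖ ≤ 1 ↔
      (|f (φ ![1, 0, 0])| ≤ 1 ∧ |f (φ ![0, 1, 0])| ≤ 1 ∧
       |f (φ ![1, 1, 0])| ≤ 1 ∧ |f (φ ![0, 0, 1])| ≤ 1) := by
    intro f
    constructor
    · intro hf
      have key : ∀ v ∈ S, |f v| ≤ 1 := by
        intro v hv
        have hv1 : ‖v‖ ≤ 1 := by
          rw [← mem_closedBall_zero_iff, hball]
          exact subset_convexHull ℝ S hv
        calc |f v| = ‖f v‖ := (Real.norm_eq_abs _).symm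
          _ ≤ ‖f‖ * ‖v‖ := f.le_opNorm v
          _ ≤ 1 := by nlinarith [norm_nonneg v, norm_nonneg f]
      exact ⟨key _ (by rw [hSdef]; simp), key _ (by rw [hSdef]; simp),
        key _ (by rw [hSdef]; simp), key _ (by rw [hSdef]; simp)⟩
    · rintro ⟨h1, h2, h3, h4⟩
      have hSle : ∀ v ∈ S, |f v| ≤ 1 := by
        intro v hv
        rw [hSdef] at hv
        simp only [Set.mem_insert_iff, Set.mem_singleton_iff] at hv
        rcases hv with rfl | rfl | rfl | rfl | rfl | rfl | rfl | rfl <;>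
          (try simp only [map_neg, abs_neg]) <;> assumption
      have hcvx : Convex ℝ {x : X | |f x| ≤ 1} := by
        have h' : {x : X | |f x| ≤ 1} = (f : X →ₗ[ℝ] ℝ) ⁻¹' (Icc (-1) 1) := by
          ext x
          simp [abs_le, Set.mem_Icc, and_comm]
        rw [h']
        exact (convex_Icc _ _).linear_preimage _
      have hball' : ∀ x ∈ closedBall (0 : X) 1, |f x| ≤ 1 := by
        rw [hball]
        exact fun x hx => convexHull_min hSle hcvx hx
      refine f.opNorm_le_bound zero_le_one fun x => ?_
      rcases eq_or_ne x 0 with rfl | hx0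
      · simp
      · have hn : 0 < ‖x‖ := norm_pos_iff.2 hx0
        have hxm : ‖x‖⁻¹ • x ∈ closedBall (0 : X) 1 := by
          rw [mem_closedBall_zero_iff, norm_smul, norm_inv, norm_norm,
            inv_mul_cancel₀ hn.ne']
        have hb := hball' _ hxm
        rw [map_smul, smul_eq_mul, abs_mul, abs_inv, abs_norm] at hb
        rw [Real.norm_eq_abs, one_mul]
        calc |f x| = ‖x‖ * (‖x‖⁻¹ * |f x|) := by field_simp
          _ ≤ ‖x‖ * 1 := by gcongr
          _ = ‖x‖ := mul_one _
  -- the coordinate description of the dual space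
  let D : (X →L[ℝ] ℝ) ≃ₗ[ℝ] (Fin 3 → ℝ) :=
    (LinearMap.toContinuousLinearMap.symm).trans
      ((φ.symm.arrowCongr (LinearEquiv.refl ℝ ℝ)).trans (LinearEquiv.piRing ℝ ℝ (Fin 3) ℝ))
  have hD : ∀ (f : X →L[ℝ] ℝ) (i : Fin 3), D f i = f (φ (Pi.single i 1)) := by
    intro f i
    simp [D, LinearEquiv.arrowCongr]
  have hsingle0 : φ (Pi.single (0 : Fin 3) (1 : ℝ)) = φ ![1, 0, 0] := by
    congr 1; funext j; fin_cases j <;> simp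
  have hsingle1 : φ (Pi.single (1 : Fin 3) (1 : ℝ)) = φ ![0, 1, 0] := by
    congr 1; funext j; fin_cases j <;> simp
  have hsingle2 : φ (Pi.single (2 : Fin 3) (1 : ℝ)) = φ ![0, 0, 1] := by
    congr 1; funext j; fin_cases j <;> simp
  have hadd : φ ![1, 1, 0] = φ ![1, 0, 0] + φ ![0, 1, 0] := by
    rw [← map_add]
    congr 1
    funext j; fin_cases j <;> norm_num
  have hpre : closedBall (0 : X →L[ℝ] ℝ) 1 = ⇑D ⁻¹' P := by
    ext f
    rw [mem_closedBall_zero_iff, hfun f]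
    simp only [Set.mem_preimage, P, Set.mem_setOf_eq, hD, hsingle0, hsingle1, hsingle2]
    constructor
    · rintro ⟨h1, h2, h3, h4⟩
      refine ⟨h1, h2, ?_, h4⟩
      rw [show f (φ ![1, 0, 0]) + f (φ ![0, 1, 0]) = f (φ ![1, 1, 0]) by
        rw [hadd, map_add]]
      exact h3
    · rintro ⟨h1, h2, h3, h4⟩
      refine ⟨h1, h2, ?_, h4⟩
      rw [hadd, map_add]
      exact h3
  have hDball : ⇑D '' closedBall (0 : X →L[ℝ] ℝ) 1 = P := by
    rw [hpre, Set.image_preimage_eq _ D.surjective]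
  have hEb : Set.extremePoints ℝ (closedBall (0 : X →L[ℝ] ℝ) 1) = ⇑D.symm '' V := by
    have h1 := image_extremePoints D (closedBall (0 : X →L[ℝ] ℝ) 1)
    rw [hDball, extP] at h1
    have h2 : ⇑D.symm '' (⇑D '' Set.extremePoints ℝ (closedBall (0 : X →L[ℝ] ℝ) 1))
        = Set.extremePoints ℝ (closedBall (0 : X →L[ℝ] ℝ) 1) := by
      rw [Set.image_image]; simp
    rw [← h2, h1]
  have hEbcard : (Set.extremePoints ℝ (closedBall (0 : X →L[ℝ] ℝ) 1)).ncard = 12 := by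
    rw [hEb, Set.ncard_image_of_injective _ D.symm.injective, cardV]
  -- transfer to the operator space
  have hb2 : closedBall (0 : X →L[ℝ] (Fin n → ℝ)) 1
      = ⇑(opPi (X := X) n).symm ''
        (Set.pi univ fun _ : Fin n => closedBall (0 : X →L[ℝ] ℝ) 1) := by
    calc closedBall (0 : X →L[ℝ] (Fin n → ℝ)) 1
        = ⇑(opPi (X := X) n).symm '' closedBall (0 : Fin n → (X →L[ℝ] ℝ)) 1 := by
          rw [(opPi (X := X) n).symm.image_closedBall, map_zero]
      _ = ⇑(opPi (X := X) n).symm ''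
            (Set.pi univ fun _ : Fin n => closedBall (0 : X →L[ℝ] ℝ) 1) := by
          rw [closedBall_pi _ zero_le_one]
          simp only [Pi.zero_apply]
  have hext2 : Set.extremePoints ℝ (closedBall (0 : X →L[ℝ] (Fin n → ℝ)) 1)
      = ⇑(opPi (X := X) n).symm '' (Set.pi univ fun _ : Fin n =>
          Set.extremePoints ℝ (closedBall (0 : X →L[ℝ] ℝ) 1)) := by
    rw [hb2, ← image_extremePoints (opPi (X := X) n).symm, extremePoints_pi]
  rw [hext2, Set.ncard_image_of_injective _ (opPi (X := X) n).symm.injective,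
    ncard_pi_const, hEbcard]
end
end

section
/- Let X be a finite-dimensional polyhedral real Banach space and let Y be a proper subspace of X. Suppose F is a facet of the closed unit ball B_X such that the intrinsic (relative) interior of F has nonempty intersection with Y. Then F ∩ Y is a facet of the closed unit ball B_Y of Y. -/
/-!
Restricting the supporting functional of `F` to `Y` exhibits `F ∩ Y` as a proper face of `B_Y`.
If a proper face `B_Y ∩ {g = 1}` contains `F ∩ Y`, extend `g` by Hahn–Banach to a functional
`G ≤ 1` on `B_X`. Then `G` attains its maximum over `F` at a relative interior point of `F`, so
`G = 1` on all of `F`; maximality of `F` forces `F = B_X ∩ {G = 1}`, which contains the face of `g`.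
-/

noncomputable section

/-- A face of the closed unit ball of a real normed space: either the ball itself or the
intersection of the ball with `{x : f x = 1}` for a linear functional `f` with `f ≤ 1` on
the ball. -/
def IsFace {X : Type*} [NormedAddCommGroup X] [NormedSpace ℝ X] (F : Set X) : Prop :=
  F = Metric.closedBall 0 1 ∨
    ∃ f : X →ₗ[ℝ] ℝ, (∀ x ∈ Metric.closedBall (0 : X) 1, f x ≤ 1) ∧
      F = Metric.closedBall 0 1 ∩ {x | f x = 1}

/-- A facet of the closed unit ball: a maximal proper face. -/
def IsFacet {X : Type*} [NormedAddCommGroup X] [NormedSpace ℝ X] (F : Set X) : Prop :=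
  IsFace F ∧ F ≠ Metric.closedBall 0 1 ∧
    ∀ Q : Set X, IsFace Q → Q ≠ Metric.closedBall 0 1 → F ⊆ Q → F = Q

open Metric Topology

section IntrinsicInterior

variable {V P : Type*} [AddCommGroup V] [Module ℝ V] [TopologicalSpace V] [ContinuousSMul ℝ V]
  [AddTorsor V P] [TopologicalSpace P] [IsTopologicalAddTorsor P] {s : Set P} {x y : P}

theorem exists_lineMap_mem_of_mem_intrinsicInterior (hx : x ∈ intrinsicInterior ℝ s)
    (hy : y ∈ s) : ∃ t : ℝ, 1 < t ∧ AffineMap.lineMap y x t ∈ s := by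
  obtain ⟨z, hz, rfl⟩ := mem_intrinsicInterior.1 hx
  let ℓ : ℝ → affineSpan ℝ s := fun t =>
    ⟨AffineMap.lineMap y z t, AffineMap.lineMap_mem t (subset_affineSpan ℝ s hy) z.2⟩
  have hℓ : Continuous ℓ := AffineMap.lineMap_continuous.subtype_mk _
  have hℓ1 : ℓ 1 = z := Subtype.ext (AffineMap.lineMap_apply_one _ _)
  have hnear : ∀ᶠ t in 𝓝[>] 1, ℓ t ∈ interior ((↑) ⁻¹' s) :=
    nhdsWithin_le_nhds (hℓ.continuousAt.preimage_mem_nhds (hℓ1 ▸ isOpen_interior.mem_nhds hz))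
  obtain ⟨t, ht, hts⟩ := ((eventually_mem_nhdsWithin (s := Set.Ioi 1) (a := 1)).and hnear).exists
  exact ⟨t, ht, (interior_subset hts : ℓ t ∈ (↑) ⁻¹' s)⟩

theorem AffineMap.eq_of_isMaxOn_of_mem_intrinsicInterior (f : P →ᵃ[ℝ] ℝ)
    (hx : x ∈ intrinsicInterior ℝ s) (hmax : IsMaxOn f s x) (hy : y ∈ s) : f y = f x := by
  obtain ⟨t, ht, hts⟩ := exists_lineMap_mem_of_mem_intrinsicInterior hx hy
  refine le_antisymm (hmax hy) (not_lt.1 fun hlt => ht.not_ge ?_)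
  have : AffineMap.lineMap (f y) (f x) t ≤ f x := by rw [← f.apply_lineMap]; exact hmax hts
  exact (lineMap_le_right_iff_le_one hlt).1 this

end IntrinsicInterior

section UnitBall

variable {X : Type*} [NormedAddCommGroup X] [NormedSpace ℝ X]

theorem closedBall_inter_ne_closedBall (f : X →ₗ[ℝ] ℝ) :
    closedBall (0 : X) 1 ∩ {x | f x = 1} ≠ closedBall 0 1 := fun h => by
  have h0 : (0 : X) ∈ closedBall (0 : X) 1 ∩ {x | f x = 1} :=
    h.symm ▸ mem_closedBall_self zero_le_one
  simp at h0

theorem LinearMap.le_norm_of_le_one_on_closedBall {f : X →ₗ[ℝ] ℝ}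
    (hf : ∀ x ∈ closedBall (0 : X) 1, f x ≤ 1) (x : X) : f x ≤ ‖x‖ := by
  rcases eq_or_ne x 0 with rfl | hx
  · simp
  have hunit := hf (‖x‖⁻¹ • x) (mem_closedBall_zero_iff.2 (norm_smul_inv_norm hx).le)
  rwa [map_smul, smul_eq_mul, inv_mul_le_iff₀ (norm_pos_iff.2 hx), mul_one] at hunit

theorem exists_extension_le_one_on_closedBall (Y : Submodule ℝ X) (g : Y →ₗ[ℝ] ℝ)
    (hg : ∀ y ∈ closedBall (0 : Y) 1, g y ≤ 1) :
    ∃ G : X →ₗ[ℝ] ℝ, (∀ y : Y, G y = g y) ∧ ∀ x ∈ closedBall (0 : X) 1, G x ≤ 1 := by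
  obtain ⟨G, hGg, hG⟩ := exists_extension_of_le_sublinear ⟨Y, g⟩ (‖·‖)
    (fun c hc x => by simp [norm_smul, abs_of_pos hc]) norm_add_le
    (g.le_norm_of_le_one_on_closedBall hg)
  exact ⟨G, hGg, fun x hx => (hG x).trans (mem_closedBall_zero_iff.1 hx)⟩

end UnitBall

theorem stmt19_general {X : Type*} [NormedAddCommGroup X] [NormedSpace ℝ X]
    (Y : Submodule ℝ X) (F : Set X) (hF : IsFacet F)
    (hint : (intrinsicInterior ℝ F ∩ (Y : Set X)).Nonempty) :
    IsFacet (Subtype.val ⁻¹' F : Set Y) := by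
  obtain ⟨f, hf, rfl⟩ := hF.1.resolve_left hF.2.1
  obtain ⟨x₀, hx₀, hx₀Y⟩ := hint
  change IsFacet (closedBall (0 : Y) 1 ∩ {y | f.comp Y.subtype y = 1})
  refine ⟨Or.inr ⟨_, fun y hy => hf y hy, rfl⟩, closedBall_inter_ne_closedBall _, ?_⟩
  rintro Q (rfl | ⟨g, hg, rfl⟩) hQ hsub
  · exact absurd rfl hQ
  obtain ⟨G, hGg, hG⟩ := exists_extension_le_one_on_closedBall Y g hg
  have hx₀F : x₀ ∈ closedBall (0 : X) 1 ∩ {x | f x = 1} := intrinsicInterior_subset hx₀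
  have hGx₀ : G x₀ = 1 := (hGg ⟨x₀, hx₀Y⟩).trans (hsub (a := ⟨x₀, hx₀Y⟩) hx₀F).2
  have hFG : closedBall 0 1 ∩ {x | f x = 1} ⊆ closedBall (0 : X) 1 ∩ {x | G x = 1} :=
    fun y hy => ⟨hy.1, hGx₀ ▸ G.toAffineMap.eq_of_isMaxOn_of_mem_intrinsicInterior hx₀
      (fun z hz => hGx₀ ▸ hG z hz.1) hy⟩
  have hFeq := hF.2.2 _ (Or.inr ⟨G, hG, rfl⟩) (closedBall_inter_ne_closedBall G) hFG
  refine hsub.antisymm fun q hq => ?_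
  change (q : X) ∈ closedBall 0 1 ∩ {x | f x = 1}
  rw [hFeq]
  exact ⟨hq.1, (hGg q).trans hq.2⟩

/-- let `X` be a finite-dimensional polyhedral real Banach space and `Y` a
proper subspace. If `F` is a facet of the closed unit ball of `X` whose intrinsic
(relative) interior meets `Y`, then `F ∩ Y` is a facet of the closed unit ball of `Y`. -/
theorem stmt19 {X : Type*} [NormedAddCommGroup X] [NormedSpace ℝ X]
    [FiniteDimensional ℝ X]
    (hpoly : (Set.extremePoints ℝ (Metric.closedBall (0 : X) 1)).Finite)
    (Y : Submodule ℝ X) (hY : Y ≠ ⊤) (F : Set X) (hF : IsFacet F)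
    (hint : (intrinsicInterior ℝ F ∩ (Y : Set X)).Nonempty) :
    IsFacet (Subtype.val ⁻¹' F : Set Y) :=
  stmt19_general Y F hF hint
end
end
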